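/- arXiv:2510.07515 — 15 statements merged into one kernel-verified Lean document; each statement's English description precedes it below -/
import Mathlib

section
/- Let q be a prime and let h_1, ..., h_m be a sequence of vectors in F_q^n with m > (q-1)n. Then there exists a nonempty subset S of {1,...,m} such that the sum over i in S of h_i equals 0. -/
/-!
Chevalley–Warning. For each coordinate `j`, the polynomial `∑ i, h i j * X i ^ (q - 1)` has
degree `q - 1`, and at a point `x` it evaluates to the sum of the `j`-th coordinates of the `h i`
with `x i ≠ 0`, since `a ^ (q - 1)` is the indicator of `a ≠ 0`. The `n` polynomials have total
degree at most `(q - 1) n < m`, so their number of common zeros is divisible by the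
characteristic; as `0` is one of them, there is another one `x ≠ 0`, and its support is the
required zero-sum set.
-/

open MvPolynomial Finset

section FiniteField

variable {K σ ι : Type*} [Field K] [Fintype σ]

theorem MvPolynomial.totalDegree_sum_C_mul_X_pow_le (a : σ → K) (k : ℕ) :
    (∑ i, C (a i) * X i ^ k).totalDegree ≤ k := by
  refine (totalDegree_finsetSum _ _).trans (Finset.sup_le fun i _ => ?_)
  rw [C_mul_X_pow_eq_monomial]
  exact (totalDegree_monomial_le _ _).trans (by simp)

variable [Fintype K]

theorem FiniteField.pow_card_sub_one_eq_ite [DecidableEq K] (a : K) :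
    a ^ (Fintype.card K - 1) = if a = 0 then 0 else 1 := by
  split_ifs with ha
  · rw [ha, zero_pow]
    exact Nat.sub_ne_zero_of_lt Fintype.one_lt_card
  · exact FiniteField.pow_card_sub_one_eq_one a ha

theorem MvPolynomial.eval_sum_C_mul_X_pow_card_sub_one [DecidableEq K] (a x : σ → K) :
    eval x (∑ i, C (a i) * X i ^ (Fintype.card K - 1)) = ∑ i with x i ≠ 0, a i := by
  simp only [map_sum, map_mul, map_pow, eval_C, eval_X, FiniteField.pow_card_sub_one_eq_ite,
    sum_filter]
  exact sum_congr rfl fun i _ => by split_ifs <;> simp_all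

variable [Fintype ι]

theorem MvPolynomial.exists_ne_zero_forall_eval_eq_zero [DecidableEq σ] {f : ι → MvPolynomial σ K}
    (h0 : ∀ i, eval 0 (f i) = 0) (hdeg : ∑ i, (f i).totalDegree < Fintype.card σ) :
    ∃ x ≠ 0, ∀ i, eval x (f i) = 0 := by
  classical
  obtain ⟨p, hp⟩ := CharP.exists K
  have hdvd := char_dvd_card_solutions_of_fintype_sum_lt p hdeg
  have hpos : 0 < Fintype.card { x : σ → K // ∀ i, eval x (f i) = 0 } :=
    Fintype.card_pos_iff.mpr ⟨⟨0, h0⟩⟩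
  have hone : 1 < Fintype.card { x : σ → K // ∀ i, eval x (f i) = 0 } :=
    (CharP.char_is_prime K p).one_lt.trans_le (Nat.le_of_dvd hpos hdvd)
  obtain ⟨⟨x, hx⟩, hne⟩ := Fintype.exists_ne_of_one_lt_card hone ⟨0, h0⟩
  exact ⟨x, fun h => hne (Subtype.ext h), hx⟩

theorem exists_nonempty_sum_eq_zero_of_card_lt (h : σ → ι → K)
    (hcard : (Fintype.card K - 1) * Fintype.card ι < Fintype.card σ) :
    ∃ S : Finset σ, S.Nonempty ∧ ∑ i ∈ S, h i = 0 := by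
  classical
  let f (j : ι) : MvPolynomial σ K := ∑ i, C (h i j) * X i ^ (Fintype.card K - 1)
  have hdeg : ∑ j, (f j).totalDegree < Fintype.card σ := calc
    ∑ j, (f j).totalDegree ≤ ∑ _j : ι, (Fintype.card K - 1) :=
      sum_le_sum fun j _ => totalDegree_sum_C_mul_X_pow_le _ _
    _ = (Fintype.card K - 1) * Fintype.card ι := by simp [mul_comm]
    _ < Fintype.card σ := hcard
  obtain ⟨x, hx0, hx⟩ := exists_ne_zero_forall_eval_eq_zero (f := f)
    (fun j => by simp only [f, eval_sum_C_mul_X_pow_card_sub_one]; simp) hdeg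
  refine ⟨univ.filter (x · ≠ 0), ?_, funext fun j => ?_⟩
  · obtain ⟨i, hi⟩ := Function.ne_iff.mp hx0
    exact ⟨i, by simpa using hi⟩
  · simpa only [f, eval_sum_C_mul_X_pow_card_sub_one, Finset.sum_apply, Pi.zero_apply] using hx j

end FiniteField

/-- Olson / van Emde Boas zero-sum theorem: any sequence of more than `(q-1)*n`
vectors in `(ZMod q)^n` (q prime) has a nonempty zero-sum subsequence. -/
theorem zero_sum_subsequence (q n m : ℕ) (hq : q.Prime) (hm : (q - 1) * n < m)
    (h : Fin m → Fin n → ZMod q) :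
    ∃ S : Finset (Fin m), S.Nonempty ∧ ∑ i ∈ S, h i = 0 := by
  have : Fact q.Prime := ⟨hq⟩
  exact exists_nonempty_sum_eq_zero_of_card_lt h (by simpa using hm)
end

section
/- Let q ≥ 3 be a prime. Given m ≥ (n+1)^2 vectors v_1, ..., v_m in F_3^n, there exist coefficients α_1, ..., α_m ∈ {0,1}, not all zero, such that α_1 v_1 + ... + α_m v_m = 0. (In other words, the F_3^n subset-sum problem always has a solution when m ≥ (n+1)^2.) -/
/-!
Chevalley–Warning. Over `𝔽_q`, the forms `f_k = ∑ i, v i k * X i ^ (q - 1)`, one per coordinate `k`,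
have total degree `n (q - 1)` together, fewer than the number `m` of variables; so the characteristic
divides the number of their common zeros. The origin is one, hence there is a common zero `x ≠ 0`.
As `x i ^ (q - 1)` is the indicator of `x i ≠ 0`, the support of `x` is a zero-sum subset.
Over `𝔽_3` this needs only `2 n < m`.
-/

open MvPolynomial Finset

section FermatForm

variable {K σ : Type*} [Field K] [Fintype K] [Fintype σ]

noncomputable def fermatForm (a : σ → K) : MvPolynomial σ K :=
  ∑ i, a i • X i ^ (Fintype.card K - 1)

theorem totalDegree_fermatForm_le (a : σ → K) :
    (fermatForm a).totalDegree ≤ Fintype.card K - 1 := by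
  refine (totalDegree_finsetSum _ _).trans (Finset.sup_le fun i _ => ?_)
  calc (a i • X i ^ (Fintype.card K - 1) : MvPolynomial σ K).totalDegree
      ≤ (X i ^ (Fintype.card K - 1) : MvPolynomial σ K).totalDegree := totalDegree_smul_le _ _
    _ = Fintype.card K - 1 := totalDegree_X_pow i _

theorem eval_fermatForm [DecidableEq K] (a : σ → K) (x : σ → K) :
    eval x (fermatForm a) = ∑ i with x i ≠ 0, a i := by
  rw [fermatForm, map_sum, sum_filter]
  refine sum_congr rfl fun i _ => ?_
  by_cases hx : x i = 0
  · simp [hx, zero_pow (Nat.sub_ne_zero_of_lt Fintype.one_lt_card)]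
  · simp [hx, FiniteField.pow_card_sub_one_eq_one _ hx]

end FermatForm

theorem exists_nonempty_sum_eq_zero_of_card_mul_lt {K ι σ : Type*} [Field K] [Fintype K]
    [Fintype ι] [Fintype σ] (v : σ → ι → K)
    (h : Fintype.card ι * (Fintype.card K - 1) < Fintype.card σ) :
    ∃ S : Finset σ, S.Nonempty ∧ ∑ i ∈ S, v i = 0 := by
  classical
  let f : ι → MvPolynomial σ K := fun k => fermatForm (v · k)
  have hdeg : ∑ k, (f k).totalDegree < Fintype.card σ :=
    (sum_le_card_nsmul _ _ _ fun k _ => totalDegree_fermatForm_le _).trans_lt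
      (by simpa using h)
  have hdvd := char_dvd_card_solutions_of_fintype_sum_lt (ringChar K) hdeg
  let origin : { x : σ → K // ∀ k, eval x (f k) = 0 } :=
    ⟨0, fun k => by rw [eval_fermatForm]; simp⟩
  have hcard : 1 < Fintype.card { x : σ → K // ∀ k, eval x (f k) = 0 } :=
    lt_of_le_of_ne (Fintype.card_pos_iff.mpr ⟨origin⟩) fun h1 =>
      CharP.ringChar_ne_one (Nat.dvd_one.mp (h1 ▸ hdvd))
  obtain ⟨⟨x, hx⟩, hne⟩ := Fintype.exists_ne_of_one_lt_card hcard origin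
  refine ⟨univ.filter (x · ≠ 0), ?_, funext fun k => ?_⟩
  · obtain ⟨i, hi⟩ := Function.ne_iff.mp (Subtype.coe_ne_coe.mpr hne)
    exact ⟨i, by simpa [origin] using hi⟩
  · simpa [f, eval_fermatForm, Finset.sum_apply] using hx k

theorem f3_subset_sum_of_sq_general (n m : ℕ)
    (hm : (n + 1) ^ 2 ≤ m) (v : Fin m → Fin n → ZMod 3) :
    ∃ S : Finset (Fin m), S.Nonempty ∧ ∑ i ∈ S, v i = 0 := by
  refine exists_nonempty_sum_eq_zero_of_card_mul_lt v ?_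
  rw [Fintype.card_fin, Fintype.card_fin, ZMod.card]
  nlinarith

/-- The `F_3^n` subset-sum problem always has a solution when `m ≥ (n+1)^2`. -/
theorem f3_subset_sum_of_sq (q : ℕ) (hq : q.Prime) (hq3 : 3 ≤ q) (n m : ℕ)
    (hm : (n + 1) ^ 2 ≤ m) (v : Fin m → Fin n → ZMod 3) :
    ∃ S : Finset (Fin m), S.Nonempty ∧ ∑ i ∈ S, v i = 0 :=
  f3_subset_sum_of_sq_general n m hm v
end

section
/- For every integer ℓ ≥ 0, given m ≥ (ℓ+1)(ℓ+2)/2 vectors lying in an ℓ-dimensional linear subspace V of F_3^n, there exists a nonempty subset of them summing to 0. -/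
/-!
Over a finite field `K` with `q` elements, any `m > (q - 1) ℓ` vectors of an `ℓ`-dimensional
space have a nonempty zero-sum subfamily: in coordinates this is the system
`∑ i, v i * x i ^ (q - 1) = 0` of `ℓ` equations of degree `q - 1` in `m` unknowns, which by
Chevalley–Warning has a solution besides `x = 0`, and the support of such a solution is the
subfamily. For `K = 𝔽₃` this needs only `2ℓ + 1 ≤ (ℓ + 1)(ℓ + 2) / 2` vectors.
-/

open Finset MvPolynomial

section

variable {K : Type*} [Field K] [Fintype K]

theorem FiniteField.pow_card_sub_one [DecidableEq K] (x : K) :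
    x ^ (Fintype.card K - 1) = if x ≠ 0 then 1 else 0 := by
  split_ifs with hx
  · exact FiniteField.pow_card_sub_one_eq_one x hx
  · rw [not_not.mp hx, zero_pow (Nat.sub_ne_zero_of_lt Fintype.one_lt_card)]

theorem exists_nonempty_forall_sum_eq_zero_of_mul_card_lt {ι σ : Type*} [Fintype ι] [Fintype σ]
    (a : ι → σ → K) (h : (Fintype.card K - 1) * Fintype.card ι < Fintype.card σ) :
    ∃ S : Finset σ, S.Nonempty ∧ ∀ j, ∑ i ∈ S, a j i = 0 := by
  classical
  obtain ⟨p, hp⟩ := CharP.exists K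
  let f : ι → MvPolynomial σ K := fun j => ∑ i, a j i • X i ^ (Fintype.card K - 1)
  have hf_eval (x : σ → K) (j : ι) : eval x (f j) = ∑ i ∈ univ.filter (x · ≠ 0), a j i := by
    simp [f, FiniteField.pow_card_sub_one, Finset.sum_filter]
  have hf_deg : ∑ j, (f j).totalDegree < Fintype.card σ := by
    refine lt_of_le_of_lt ?_ (by simpa [mul_comm] using h)
    refine (sum_le_sum fun j _ => totalDegree_finsetSum_le fun i _ =>
      (totalDegree_smul_le _ _).trans (totalDegree_X_pow _ _).le).trans ?_
    simp
  let zero : { x : σ → K // ∀ j, eval x (f j) = 0 } := ⟨0, fun j => (hf_eval 0 j).trans (by simp)⟩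
  have hdvd := char_dvd_card_solutions_of_fintype_sum_lt p hf_deg
  have hcard := (CharP.char_is_prime K p).one_lt.trans_le <|
    Nat.le_of_dvd (Fintype.card_pos_iff.mpr ⟨zero⟩) hdvd
  obtain ⟨⟨x, hx⟩, hx0⟩ := Fintype.exists_ne_of_one_lt_card hcard zero
  refine ⟨univ.filter (x · ≠ 0), ?_, fun j => hf_eval x j ▸ hx j⟩
  obtain ⟨i, hi⟩ := Function.ne_iff.mp (Subtype.coe_ne_coe.mpr hx0)
  exact ⟨i, mem_filter.mpr ⟨mem_univ i, hi⟩⟩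

theorem Module.exists_nonempty_sum_eq_zero_of_mul_finrank_lt {M σ : Type*} [AddCommGroup M]
    [Module K M] [FiniteDimensional K M] [Fintype σ] (v : σ → M)
    (h : (Fintype.card K - 1) * Module.finrank K M < Fintype.card σ) :
    ∃ S : Finset σ, S.Nonempty ∧ ∑ i ∈ S, v i = 0 := by
  let b := Module.finBasis K M
  obtain ⟨S, hS, hsum⟩ :=
    exists_nonempty_forall_sum_eq_zero_of_mul_card_lt (fun j i => b.repr (v i) j) (by simpa using h)
  refine ⟨S, hS, b.repr.injective ?_⟩
  ext j
  simpa using hsum j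

end

theorem Nat.two_mul_lt_succ_mul_add_two_div_two (ℓ : ℕ) : 2 * ℓ < (ℓ + 1) * (ℓ + 2) / 2 :=
  (Nat.le_div_iff_mul_le two_pos).mpr (by rw [Nat.succ_eq_add_one]; nlinarith [Nat.le_mul_self ℓ])

/-- Among any `(ℓ+1)(ℓ+2)/2` vectors in an `ℓ`-dimensional subspace of `F_3^n`
there is a nonempty subset summing to zero. -/
theorem f3_subset_sum_subspace (n ℓ m : ℕ)
    (V : Submodule (ZMod 3) (Fin n → ZMod 3))
    (hV : Module.finrank (ZMod 3) V = ℓ)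
    (hm : (ℓ + 1) * (ℓ + 2) / 2 ≤ m)
    (v : Fin m → Fin n → ZMod 3) (hv : ∀ i, v i ∈ V) :
    ∃ S : Finset (Fin m), S.Nonempty ∧ ∑ i ∈ S, v i = 0 := by
  have hcard : (Fintype.card (ZMod 3) - 1) * Module.finrank (ZMod 3) V < Fintype.card (Fin m) := by
    rw [ZMod.card, hV, Fintype.card_fin]
    exact (Nat.two_mul_lt_succ_mul_add_two_div_two ℓ).trans_le hm
  obtain ⟨S, hS, hsum⟩ :=
    Module.exists_nonempty_sum_eq_zero_of_mul_finrank_lt (fun i => (⟨v i, hv i⟩ : V)) hcard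
  exact ⟨S, hS, by simpa using congrArg Subtype.val hsum⟩
end

section
/- Let h > 1 be an integer and let v_1, ..., v_m be vectors in F_q^n (q an odd prime) admitting a nontrivial (±h)-zero-sum, i.e., integers α_i with |α_i| ≤ h, not all zero, and Σ α_i v_i = 0 in F_q^n. Then there exists a vector u which is a nontrivial (±1)-sum of the v_i (u = Σ β_i v_i with β_i ∈ {-1,0,1} not all zero), and such that for every integer c with |c| ≤ h, the vector c·u is a (±⌊h/2⌋)-sum of the v_i. -/
/-!
Write `H = ⌊h/2⌋`. Multiplying the zero-sum `α` by a suitable positive integer keeps its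
coefficients in `[-h, h]` and pushes the largest one beyond `H`. Then take `β i = τ (α i)`,
where `τ = thresholdSign H` records whether `x > H`, `x < -H` or neither. For `|c| ≤ h`, subtracting
`τ c` times the zero-sum from `c • ∑ β i • v i` leaves the coefficients `c τ(α i) - τ(c) α i`,
and these have absolute value at most `H` because `h ≤ 2H + 1`.
-/

open Finset

def thresholdSign (H x : ℤ) : ℤ :=
  if H < x then 1 else if x < -H then -1 else 0

theorem abs_thresholdSign_le_one (H x : ℤ) : |thresholdSign H x| ≤ 1 := by
  unfold thresholdSign
  split_ifs <;> simp

theorem thresholdSign_eq_zero_iff {H x : ℤ} : thresholdSign H x = 0 ↔ |x| ≤ H := by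
  unfold thresholdSign
  rw [abs_le]
  split_ifs <;> simp only [one_ne_zero, false_iff, true_iff, not_and, not_le] <;> omega

theorem abs_mul_thresholdSign_sub_le {H x y : ℤ} (hx : |x| ≤ 2 * H + 1) (hy : |y| ≤ 2 * H + 1) :
    |x * thresholdSign H y - thresholdSign H x * y| ≤ H := by
  unfold thresholdSign
  rw [abs_le] at hx hy ⊢
  split_ifs <;> omega

theorem Int.exists_pos_lt_mul_le_max {a : ℤ} (ha : 0 < a) (H : ℤ) :
    ∃ t : ℤ, 0 < t ∧ H < a * t ∧ a * t ≤ max a (2 * H) := by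
  rcases lt_or_ge H a with hHa | haH
  · exact ⟨1, one_pos, by simpa using hHa, by simp⟩
  · refine ⟨H / a + 1, by have := Int.ediv_nonneg (by omega : 0 ≤ H) ha.le; omega, ?_, ?_⟩
    · simpa [mul_comm] using Int.lt_ediv_add_one_mul_self H ha
    · have := Int.mul_ediv_self_le (x := H) ha.ne'
      rw [mul_add, mul_one]
      exact le_max_of_le_right (by omega)

theorem exists_mul_abs_gt {ι : Type*} [Fintype ι] {H h : ℤ} (hHh : 2 * H ≤ h) {α : ι → ℤ}
    (hα : ∀ i, |α i| ≤ h) (hne : α ≠ 0) :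
    ∃ t : ℤ, (∀ i, |t * α i| ≤ h) ∧ ∃ j, H < |t * α j| := by
  obtain ⟨j, hj⟩ := Function.ne_iff.mp hne
  obtain ⟨k, -, hk⟩ := exists_max_image univ (fun i => |α i|) ⟨j, mem_univ j⟩
  have ha : 0 < |α k| := (abs_pos.mpr hj).trans_le (hk j (mem_univ j))
  obtain ⟨t, ht, hHt, hth⟩ := Int.exists_pos_lt_mul_le_max ha H
  refine ⟨t, fun i => ?_, k, ?_⟩
  · calc |t * α i| = |α i| * t := by rw [abs_mul, abs_of_pos ht, mul_comm]
      _ ≤ |α k| * t := mul_le_mul_of_nonneg_right (hk i (mem_univ i)) ht.le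
      _ ≤ h := hth.trans (max_le (hα k) hHh)
  · rwa [abs_mul, abs_of_pos ht, mul_comm]

theorem exists_reducible_of_zero_sum_of_lt_abs {ι M : Type*} [Fintype ι] [AddCommGroup M]
    {H h : ℤ} (hh : h ≤ 2 * H + 1) {v : ι → M} {α : ι → ℤ} (hα : ∀ i, |α i| ≤ h) {j : ι}
    (hj : H < |α j|) (hsum : ∑ i, α i • v i = 0) :
    ∃ β : ι → ℤ, (∀ i, |β i| ≤ 1) ∧ β ≠ 0 ∧
      ∀ c : ℤ, |c| ≤ h → ∃ γ : ι → ℤ, (∀ i, |γ i| ≤ H) ∧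
        c • ∑ i, β i • v i = ∑ i, γ i • v i := by
  refine ⟨fun i => thresholdSign H (α i), fun i => abs_thresholdSign_le_one H (α i),
    fun h0 => (thresholdSign_eq_zero_iff.mp (congrFun h0 j)).not_gt hj, fun c hc => ?_⟩
  refine ⟨fun i => c * thresholdSign H (α i) - thresholdSign H c * α i,
    fun i => abs_mul_thresholdSign_sub_le (hc.trans hh) ((hα i).trans hh), ?_⟩
  simp only [sub_smul, mul_smul, sum_sub_distrib, ← smul_sum, hsum, smul_zero, sub_zero]

theorem reducible_of_zero_sum_general (q : ℕ)
    (n m : ℕ) (h : ℤ)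
    (v : Fin m → Fin n → ZMod q) (α : Fin m → ℤ)
    (hα : ∀ i, |α i| ≤ h) (hne : α ≠ 0)
    (hsum : ∑ i, (α i : ZMod q) • v i = 0) :
    ∃ β : Fin m → ℤ, (∀ i, |β i| ≤ 1) ∧ β ≠ 0 ∧
      ∀ c : ℤ, |c| ≤ h → ∃ γ : Fin m → ℤ, (∀ i, |γ i| ≤ h / 2) ∧
        (c : ZMod q) • (∑ i, (β i : ZMod q) • v i) = ∑ i, (γ i : ZMod q) • v i := by
  simp only [Int.cast_smul_eq_zsmul] at hsum ⊢
  obtain ⟨t, htα, j, hj⟩ := exists_mul_abs_gt (H := h / 2) (by omega) hα hne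
  refine exists_reducible_of_zero_sum_of_lt_abs (α := fun i => t * α i) (by omega) htα hj ?_
  simp only [mul_smul, ← smul_sum, hsum, smul_zero]

/-- From a nontrivial `(±h)`-zero-sum one obtains a `(±h → ±⌊h/2⌋)`-reducible
vector: a nontrivial `(±1)`-sum `u` such that every `c·u` with `|c| ≤ h` is a
`(±⌊h/2⌋)`-sum of the `v i`. -/
theorem reducible_of_zero_sum (q : ℕ) (hq : q.Prime) (hodd : Odd q)
    (n m : ℕ) (h : ℤ) (hh : 1 < h)
    (v : Fin m → Fin n → ZMod q) (α : Fin m → ℤ)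
    (hα : ∀ i, |α i| ≤ h) (hne : α ≠ 0)
    (hsum : ∑ i, (α i : ZMod q) • v i = 0) :
    ∃ β : Fin m → ℤ, (∀ i, |β i| ≤ 1) ∧ β ≠ 0 ∧
      ∀ c : ℤ, |c| ≤ h → ∃ γ : Fin m → ℤ, (∀ i, |γ i| ≤ h / 2) ∧
        (c : ZMod q) • (∑ i, (β i : ZMod q) • v i) = ∑ i, (γ i : ZMod q) • v i :=
  reducible_of_zero_sum_general q n m h v α hα hne hsum
end

section
/- Let q ≥ 3 be a prime and let k with 1 ≤ k ≤ ⌊q/2⌋ be an integer power of 2. Then for any m ≥ (n+1)^k vectors v_1, ..., v_m in F_q^n, there exist integers α_1, ..., α_m with |α_i| ≤ ⌊q/(2k)⌋, not all zero, such that α_1 v_1 + ... + α_m v_m = 0 in F_q^n. -/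
/-!
For `k = 1` this is linear dependence: `m > n` vectors of `F_q^n` are dependent, and every
coefficient has a representative of absolute value at most `⌊q/2⌋`. For `k = 2^j ≥ 2` and
`h = ⌊q/(2k)⌋ ≥ 1` a pigeonhole argument suffices: there are `(h+1)^m` sums `∑ β_i v_i` with
`0 ≤ β_i ≤ h`, and `(h+1)^m > q^n` because `q < (h+1) 2^{j+1} ≤ (h+1)^{j+2}` and
`m ≥ (n+1)^{2^j} ≥ (n+1)^{j+1} > (j+2) n`. Two sums that agree give a zero-sum with coefficients
`β_i - β'_i`.
-/

def HasZeroSumWithin {ι M : Type*} [Fintype ι] [AddCommGroup M] (h : ℕ) (v : ι → M) : Prop :=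
  ∃ α : ι → ℤ, (∀ i, |α i| ≤ h) ∧ α ≠ 0 ∧ ∑ i, α i • v i = 0

section ZeroSums

variable {ι M : Type*} [Fintype ι] [AddCommGroup M]

theorem hasZeroSumWithin_of_card_lt [Fintype M] (v : ι → M) {h : ℕ}
    (hcard : Fintype.card M < (h + 1) ^ Fintype.card ι) : HasZeroSumWithin h v := by
  classical
  let F : (ι → Fin (h + 1)) → M := fun β => ∑ i, ((β i : ℕ) : ℤ) • v i
  obtain ⟨β, β', hne, hF⟩ :=
    Fintype.exists_ne_map_eq_of_card_lt F (by simpa only [Fintype.card_fun, Fintype.card_fin])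
  refine ⟨fun i => (β i : ℕ) - (β' i : ℕ), fun i => ?_, fun hzero => hne ?_, ?_⟩
  · have := (β i).is_le
    have := (β' i).is_le
    rw [abs_le]
    constructor <;> dsimp only <;> omega
  · funext i
    exact Fin.ext (by exact_mod_cast sub_eq_zero.mp (congrFun hzero i))
  · simp only [sub_smul, Finset.sum_sub_distrib]
    exact sub_eq_zero.mpr hF

theorem hasZeroSumWithin_half_of_finrank_lt {p : ℕ} [Fact p.Prime] [Module (ZMod p) M]
    [FiniteDimensional (ZMod p) M] (v : ι → M)
    (hcard : Module.finrank (ZMod p) M < Fintype.card ι) : HasZeroSumWithin (p / 2) v := by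
  have hdep : ¬LinearIndependent (ZMod p) v := fun hli =>
    (hli.fintype_card_le_finrank.trans_lt hcard).false
  obtain ⟨c, hsum, i, hi⟩ := Fintype.not_linearIndependent_iff.mp hdep
  refine ⟨fun i => (c i).valMinAbs, fun i => ?_, fun hzero => hi ?_, ?_⟩
  · rw [Int.abs_eq_natAbs]
    exact_mod_cast ZMod.natAbs_valMinAbs_le (c i)
  · exact ZMod.valMinAbs_eq_zero _ |>.mp (congrFun hzero i)
  · simpa only [← Int.cast_smul_eq_zsmul (ZMod p), ZMod.coe_valMinAbs] using hsum

end ZeroSums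

theorem mul_add_two_lt_succ_pow {j : ℕ} (hj : 1 ≤ j) (n : ℕ) :
    n * (j + 2) < (n + 1) ^ (j + 1) := by
  have hbern : n * j + 1 ≤ (n + 1) ^ j := by
    simpa [add_comm, mul_comm] using
      one_add_mul_le_pow_of_sq_nonneg (a := n) (by positivity) (by positivity) (by positivity) j
  calc n * (j + 2) < (n * j + 1) * (n + 1) := by nlinarith [Nat.mul_le_mul_left (n * n) hj]
    _ ≤ (n + 1) ^ (j + 1) := by rw [pow_succ]; gcongr

theorem lt_div_two_pow_add_one_pow_succ {q i : ℕ} (hq : 2 ^ i ≤ q) :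
    q < (q / 2 ^ i + 1) ^ (i + 1) := by
  have hh : 1 ≤ q / 2 ^ i := (Nat.one_le_div_iff (by positivity)).mpr hq
  calc q < (q / 2 ^ i + 1) * 2 ^ i := by
        have := Nat.lt_div_mul_add (a := q) (b := 2 ^ i) (by positivity)
        linarith
    _ ≤ (q / 2 ^ i + 1) * (q / 2 ^ i + 1) ^ i := by gcongr; omega
    _ = (q / 2 ^ i + 1) ^ (i + 1) := by ring

theorem pow_lt_div_two_pow_succ_add_one_pow {q n m j : ℕ} (hj : 1 ≤ j) (hq : 2 ^ (j + 1) ≤ q)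
    (hm : (n + 1) ^ 2 ^ j ≤ m) : q ^ n < (q / 2 ^ (j + 1) + 1) ^ m := by
  have hh : 1 ≤ q / 2 ^ (j + 1) := (Nat.one_le_div_iff (by positivity)).mpr hq
  calc q ^ n ≤ ((q / 2 ^ (j + 1) + 1) ^ (j + 2)) ^ n :=
        Nat.pow_le_pow_left (lt_div_two_pow_add_one_pow_succ hq).le n
    _ = (q / 2 ^ (j + 1) + 1) ^ (n * (j + 2)) := by rw [← pow_mul, mul_comm]
    _ < (q / 2 ^ (j + 1) + 1) ^ m := by
        refine Nat.pow_lt_pow_right (by omega) ?_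
        calc n * (j + 2) < (n + 1) ^ (j + 1) := mul_add_two_lt_succ_pow hj n
          _ ≤ (n + 1) ^ 2 ^ j := Nat.pow_le_pow_right (by omega) Nat.lt_two_pow_self
          _ ≤ m := hm

theorem sis_halving_general (q : ℕ) (hq : q.Prime)
    (k : ℕ) (hk : ∃ j : ℕ, k = 2 ^ j) (hk2 : k ≤ q / 2)
    (n m : ℕ) (hm : (n + 1) ^ k ≤ m)
    (v : Fin m → Fin n → ZMod q) :
    ∃ α : Fin m → ℤ, (∀ i, |α i| ≤ (q / (2 * k) : ℕ)) ∧ α ≠ 0 ∧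
      ∑ i, (α i : ZMod q) • v i = 0 := by
  have : Fact q.Prime := ⟨hq⟩
  suffices HasZeroSumWithin (q / (2 * k)) v by
    obtain ⟨α, hα, hne, hsum⟩ := this
    exact ⟨α, hα, hne, by simpa only [Int.cast_smul_eq_zsmul] using hsum⟩
  obtain ⟨j, rfl⟩ := hk
  rcases Nat.eq_zero_or_pos j with rfl | hj
  · refine hasZeroSumWithin_half_of_finrank_lt v ?_
    simpa using hm
  · rw [show 2 * 2 ^ j = 2 ^ (j + 1) by ring]
    apply hasZeroSumWithin_of_card_lt
    simpa using pow_lt_div_two_pow_succ_add_one_pow hj (by omega) hm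

/-- For `k` a power of two with `1 ≤ k ≤ ⌊q/2⌋` and `m ≥ (n+1)^k` vectors in
`F_q^n`, there is a nontrivial `(±⌊q/(2k)⌋)`-zero-sum. -/
theorem sis_halving (q : ℕ) (hq : q.Prime) (hq3 : 3 ≤ q)
    (k : ℕ) (hk : ∃ j : ℕ, k = 2 ^ j) (hk1 : 1 ≤ k) (hk2 : k ≤ q / 2)
    (n m : ℕ) (hm : (n + 1) ^ k ≤ m)
    (v : Fin m → Fin n → ZMod q) :
    ∃ α : Fin m → ℤ, (∀ i, |α i| ≤ (q / (2 * k) : ℕ)) ∧ α ≠ 0 ∧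
      ∑ i, (α i : ZMod q) • v i = 0 :=
  sis_halving_general q hq k hk hk2 n m hm v
end

section
/- Let q be a prime and r ≥ 1 an integer. Given ℓ + r vectors lying in a linear subspace of F_q^n of dimension ℓ, there exists a nontrivial F_q-linear combination of them equal to zero whose support (set of nonzero coefficients) has size at most ((1 - q^{-1})/(1 - q^{-r})) · ℓ + r. -/
/-!
The dependencies among the `v i` form the kernel `K` of `α ↦ ∑ i, α i • v i`, a subspace of
`F_q^(ℓ + r)` of dimension at least `r`. Each coordinate functional vanishes on at least a
`1/q` fraction of `K`, so the Hamming weights of the `|K| - 1` nonzero elements of `K` add up to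
at most `(1 - q⁻¹)(ℓ + r)|K|`, and one of them has weight at most
`(1 - q⁻¹)/(1 - |K|⁻¹) · (ℓ + r)`. Since `|K| ≥ q^r` and `(1 - q⁻¹)/(1 - q^{-r}) ≤ 1`, this is
at most the claimed bound.
-/

open Finset Module

theorem LinearMap.card_le_card_mul_card_ker {R M N : Type*} [Ring R] [AddCommGroup M]
    [AddCommGroup N] [Module R M] [Module R N] [Finite N] (f : M →ₗ[R] N) :
    Nat.card M ≤ Nat.card N * Nat.card (ker f) := by
  rw [(ker f).card_eq_card_quotient_mul_card, Nat.card_congr f.quotKerEquivRange.toEquiv,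
    mul_comm]
  gcongr
  exact Nat.card_le_card_of_injective _ Subtype.val_injective

theorem card_le_finrank_add_finrank_ker_linearCombination {K M ι : Type*} [Field K]
    [AddCommGroup M] [Module K M] [Fintype ι] {v : ι → M} {V : Submodule K M}
    [Module.Finite K V] (hv : ∀ i, v i ∈ V) :
    Fintype.card ι ≤ finrank K V + finrank K (LinearMap.ker (Fintype.linearCombination K v)) := by
  have hrange : LinearMap.range (Fintype.linearCombination K v) ≤ V := by
    rw [Fintype.range_linearCombination]
    exact Submodule.span_le.2 (Set.range_subset_iff.2 hv)
  have hrank := (Fintype.linearCombination K v).finrank_range_add_finrank_ker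
  rw [finrank_fintype_fun_eq_card] at hrank
  have := Submodule.finrank_mono hrange
  omega

namespace Submodule

variable {F ι : Type*} [Field F] [Fintype F] [DecidableEq F]
  (K : Submodule F (ι → F)) [Fintype K]

theorem card_filter_apply_ne_zero_le (i : ι) :
    (#{β : K | β.1 i ≠ 0} : ℝ) ≤ (1 - (Fintype.card F : ℝ)⁻¹) * Fintype.card K := by
  have hker : Fintype.card K ≤ Fintype.card F * #{β : K | β.1 i = 0} := by
    have hcoord := ((LinearMap.proj i).comp K.subtype).card_le_card_mul_card_ker
    have hkernel : Nat.card (LinearMap.ker ((LinearMap.proj i).comp K.subtype)) =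
        #{β : K | β.1 i = 0} := by
      rw [← Fintype.card_subtype, ← Nat.card_eq_fintype_card]
      rfl
    rwa [hkernel, Nat.card_eq_fintype_card, Nat.card_eq_fintype_card] at hcoord
  have hsplit := card_filter_add_card_filter_not (s := (univ : Finset K)) (fun β => β.1 i ≠ 0)
  simp only [not_not, card_univ] at hsplit
  have hq : (0 : ℝ) < Fintype.card F := by exact_mod_cast Fintype.card_pos
  rw [← hsplit] at hker ⊢
  have : ((#{β : K | β.1 i ≠ 0} + #{β : K | β.1 i = 0} : ℕ) : ℝ) / Fintype.card F
      ≤ #{β : K | β.1 i = 0} :=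
    div_le_of_le_mul₀ hq.le (by positivity) (by rw [mul_comm]; exact_mod_cast hker)
  push_cast at this ⊢
  rw [sub_mul, one_mul, inv_mul_eq_div]
  linarith

variable [Fintype ι]

theorem sum_hammingNorm_le :
    ∑ β : K, (hammingNorm β.1 : ℝ) ≤
      (1 - (Fintype.card F : ℝ)⁻¹) * Fintype.card ι * Fintype.card K :=
  calc ∑ β : K, (hammingNorm β.1 : ℝ) = ∑ i, (#{β : K | β.1 i ≠ 0} : ℝ) := by
        simp only [hammingNorm, card_filter]
        push_cast
        exact sum_comm
    _ ≤ ∑ _i : ι, (1 - (Fintype.card F : ℝ)⁻¹) * Fintype.card K :=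
        sum_le_sum fun i _ => K.card_filter_apply_ne_zero_le i
    _ = _ := by rw [sum_const, card_univ, nsmul_eq_mul]; ring

theorem exists_ne_zero_hammingNorm_le (hK : K ≠ ⊥) :
    ∃ β ∈ K, β ≠ 0 ∧ (hammingNorm β : ℝ) ≤
      (1 - (Fintype.card F : ℝ)⁻¹) / (1 - (Fintype.card K : ℝ)⁻¹) * Fintype.card ι := by
  have : Nontrivial K := nontrivial_iff_ne_bot.2 hK
  obtain ⟨β, hβ, hmin⟩ := exists_min_image {γ : K | γ ≠ 0} (fun γ => hammingNorm γ.1)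
    ((exists_ne (0 : K)).imp fun γ hγ => mem_filter.2 ⟨mem_univ γ, hγ⟩)
  refine ⟨β, β.2, fun h => (mem_filter.1 hβ).2 (Subtype.ext h), ?_⟩
  have hK2 : (2 : ℝ) ≤ Fintype.card K := by exact_mod_cast Fintype.one_lt_card
  have havg : ((Fintype.card K : ℝ) - 1) * hammingNorm β.1 ≤ ∑ γ : K, (hammingNorm γ.1 : ℝ) :=
    calc ((Fintype.card K : ℝ) - 1) * hammingNorm β.1
        = #{γ : K | γ ≠ 0} • (hammingNorm β.1 : ℝ) := by
          rw [filter_ne', card_erase_of_mem (mem_univ _), card_univ, nsmul_eq_mul,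
            Nat.cast_sub Fintype.card_pos, Nat.cast_one]
      _ ≤ ∑ γ ∈ {γ : K | γ ≠ 0}, (hammingNorm γ.1 : ℝ) :=
          card_nsmul_le_sum _ _ _ fun γ hγ => by exact_mod_cast hmin γ hγ
      _ ≤ ∑ γ : K, (hammingNorm γ.1 : ℝ) :=
          sum_le_sum_of_subset_of_nonneg (filter_subset _ _) fun _ _ _ => by positivity
  have hpos : (0 : ℝ) < 1 - (Fintype.card K : ℝ)⁻¹ := by
    rw [sub_pos]; exact inv_lt_one_of_one_lt₀ (by linarith)
  rw [div_mul_eq_mul_div, le_div_iff₀ hpos]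
  have hKpos : (0 : ℝ) < Fintype.card K := by linarith
  have hrescale : (hammingNorm β.1 : ℝ) * (1 - (Fintype.card K : ℝ)⁻¹) =
      ((Fintype.card K : ℝ) - 1) * hammingNorm β.1 / Fintype.card K := by
    field_simp
  rw [hrescale, div_le_iff₀ hKpos]
  exact havg.trans K.sum_hammingNorm_le

end Submodule

theorem div_one_sub_inv_mul_add_le {q N ℓ : ℝ} {r : ℕ} (hq : 1 < q) (hr : 1 ≤ r)
    (hN : q ^ r ≤ N) (hℓ : 0 ≤ ℓ) :
    (1 - q⁻¹) / (1 - N⁻¹) * (ℓ + r) ≤ (1 - q⁻¹) / (1 - (q ^ r)⁻¹) * ℓ + r := by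
  have hqr : q ≤ q ^ r := le_self_pow₀ hq.le (by omega)
  have hq_sub : 0 < 1 - q⁻¹ := sub_pos.2 (inv_lt_one_of_one_lt₀ hq)
  have hqr_sub : 0 < 1 - (q ^ r)⁻¹ := sub_pos.2 (inv_lt_one_of_one_lt₀ (hq.trans_le hqr))
  have hcoeff_le_one : (1 - q⁻¹) / (1 - (q ^ r)⁻¹) ≤ 1 :=
    div_le_one_of_le₀ (by gcongr) hqr_sub.le
  calc (1 - q⁻¹) / (1 - N⁻¹) * (ℓ + r)
      ≤ (1 - q⁻¹) / (1 - (q ^ r)⁻¹) * (ℓ + r) := by gcongr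
    _ ≤ (1 - q⁻¹) / (1 - (q ^ r)⁻¹) * ℓ + r := by
        rw [mul_add]
        gcongr
        exact mul_le_of_le_one_left (by positivity) hcoeff_le_one

/-- Among `ℓ + r` vectors in an `ℓ`-dimensional subspace of `F_q^n` there is a
nontrivial zero linear combination with support of size at most
`((1 - q⁻¹)/(1 - q^{-r}))·ℓ + r`. -/
theorem sparse_dependence (q : ℕ) (hq : q.Prime) (r ℓ n : ℕ) (hr : 1 ≤ r)
    (V : Submodule (ZMod q) (Fin n → ZMod q))
    (hV : Module.finrank (ZMod q) V = ℓ)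
    (v : Fin (ℓ + r) → Fin n → ZMod q) (hv : ∀ i, v i ∈ V) :
    ∃ α : Fin (ℓ + r) → ZMod q, α ≠ 0 ∧ (∑ i, α i • v i) = 0 ∧
      ((Finset.univ.filter fun i => α i ≠ 0).card : ℝ) ≤
        ((1 - (q : ℝ)⁻¹) / (1 - ((q : ℝ) ^ r)⁻¹)) * ℓ + r := by
  have : Fact q.Prime := ⟨hq⟩
  have hrank : r ≤ finrank (ZMod q) (LinearMap.ker (Fintype.linearCombination (ZMod q) v)) := by
    have := card_le_finrank_add_finrank_ker_linearCombination hv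
    rw [Fintype.card_fin, hV] at this
    omega
  set K := LinearMap.ker (Fintype.linearCombination (ZMod q) v)
  have hK : K ≠ ⊥ := fun h => by rw [h, finrank_bot] at hrank; omega
  have : Fintype K := Fintype.ofFinite K
  obtain ⟨α, hαK, hα0, hα⟩ := K.exists_ne_zero_hammingNorm_le hK
  refine ⟨α, hα0, by simpa [K, Fintype.linearCombination_apply] using hαK, ?_⟩
  have hcard : (q : ℝ) ^ r ≤ Fintype.card K := by
    rw [Module.card_eq_pow_finrank (K := ZMod q), ZMod.card]
    exact_mod_cast Nat.pow_le_pow_right hq.pos hrank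
  rw [ZMod.card, Fintype.card_fin, Nat.cast_add] at hα
  exact hα.trans (div_one_sub_inv_mul_add_le (by exact_mod_cast hq.one_lt) hr hcard ℓ.cast_nonneg)
end

section
/- Let q ≥ 5 be a prime. Every subset A of F_q with |A| ≥ q - log_4(q+2) contains an arithmetic progression of length (q+1)/2. -/
/-!
It suffices to find `a` and `δ ≠ 0` such that every `δ (b - a)` with `b ∉ A` lies at distance
less than `w = ⌊(q+2)/4⌋` from `0` in `𝔽_q`: then `a + (w + i) δ⁻¹ ∈ A` for all `i < (q+1)/2`,
as `w + i` is at distance at least `w` from `0`. Split `{1, …, q-1}` into four blocks of length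
`w`. Each nonzero dilation `d` assigns to every `b ∉ A` other than `a` the block of `d (b - a)`;
there are `4 ^ (|Aᶜ| - 1) < q - 1` such assignments, so two dilations `d₁ ≠ d₂` agree, and
`δ = d₂ - d₁` does the job.
-/

open Finset

def NearZero {p : ℕ} (w : ℕ) (z : ZMod p) : Prop :=
  ∃ k < w, z = k ∨ z = -k

lemma nearZero_zero {p w : ℕ} (hw : 0 < w) : NearZero w (0 : ZMod p) :=
  ⟨0, hw, Or.inl Nat.cast_zero.symm⟩

lemma not_nearZero_natCast {p w n : ℕ} (hwn : w ≤ n) (hnp : n + w ≤ p) :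
    ¬ NearZero w (n : ZMod p) := by
  rintro ⟨k, hk, h | h⟩
  · rw [ZMod.natCast_eq_natCast_iff', Nat.mod_eq_of_lt (by omega), Nat.mod_eq_of_lt (by omega)] at h
    omega
  · have hdvd : p ∣ n + k := by
      rw [← ZMod.natCast_eq_zero_iff, Nat.cast_add, h, neg_add_cancel]
    have := Nat.le_of_dvd (by omega) hdvd
    omega

lemma nearZero_sub_of_div_eq {p w : ℕ} [NeZero p] (hw : 0 < w) {u v : ZMod p} (hu : u ≠ 0)
    (hv : v ≠ 0) (h : (u.val - 1) / w = (v.val - 1) / w) : NearZero w (v - u) := by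
  have hu1 := (ZMod.val_ne_zero u).2 hu
  have hv1 := (ZMod.val_ne_zero v).2 hv
  have hu' := Nat.div_add_mod (u.val - 1) w
  have hv' := Nat.div_add_mod (v.val - 1) w
  have := Nat.mod_lt (u.val - 1) hw
  have := Nat.mod_lt (v.val - 1) hw
  rw [h] at hu'
  generalize w * ((v.val - 1) / w) = s at hu' hv'
  rcases le_total u.val v.val with hle | hle
  · refine ⟨v.val - u.val, by omega, Or.inl ?_⟩
    rw [Nat.cast_sub hle, ZMod.natCast_zmod_val, ZMod.natCast_zmod_val]
  · refine ⟨u.val - v.val, by omega, Or.inr ?_⟩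
    rw [Nat.cast_sub hle, ZMod.natCast_zmod_val, ZMod.natCast_zmod_val, neg_sub]

lemma exists_dilation_sub_nearZero {p w : ℕ} [Fact p.Prime] (hw : p ≤ 4 * w + 1)
    {B : Finset (ZMod p)} {a : ZMod p} (ha : a ∈ B) (hB : 4 ^ (#B - 1) < p - 1) :
    ∃ δ : ZMod p, δ ≠ 0 ∧ ∀ b ∈ B, NearZero w (δ * (b - a)) := by
  have hw0 : 0 < w := by
    have := (Fact.out : p.Prime).two_le
    omega
  let block (d : ZMod p) (b : B.erase a) : ℕ := ((d * (b - a)).val - 1) / w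
  have hmaps : ∀ d ∈ univ.erase 0, block d ∈ Fintype.piFinset fun _ => range 4 := by
    intro d _
    simp only [Fintype.mem_piFinset, mem_range]
    intro b
    have := (d * (b - a)).val_lt
    exact Nat.div_lt_of_lt_mul (by omega)
  have hcard : #(Fintype.piFinset fun _ : B.erase a => range 4) < #(univ.erase (0 : ZMod p)) := by
    simpa [Fintype.card_piFinset, card_erase_of_mem ha, ZMod.card] using hB
  obtain ⟨d₁, hd₁, d₂, hd₂, hne, heq⟩ := exists_ne_map_eq_of_card_lt_of_maps_to hcard hmaps
  refine ⟨d₂ - d₁, sub_ne_zero.2 hne.symm, fun b hb => ?_⟩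
  rcases eq_or_ne b a with rfl | hba
  · simpa using nearZero_zero hw0
  have hba' : b - a ≠ 0 := sub_ne_zero.2 hba
  rw [sub_mul]
  exact nearZero_sub_of_div_eq hw0 (mul_ne_zero (ne_of_mem_erase hd₁) hba')
    (mul_ne_zero (ne_of_mem_erase hd₂) hba') (congrFun heq ⟨b, mem_erase.2 ⟨hba, hb⟩⟩)

lemma pow_card_compl_le_of_le_logb {α : Type*} [Fintype α] [DecidableEq α] {b N : ℕ}
    (hb : 1 < b) (hN : 0 < N) {A : Finset α}
    (hA : (Fintype.card α : ℝ) - Real.logb b N ≤ #A) : b ^ #Aᶜ ≤ N := by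
  have hcompl : (#Aᶜ : ℝ) ≤ Real.logb b N := by
    have := card_add_card_compl A
    have : (#A : ℝ) + #Aᶜ = Fintype.card α := by exact_mod_cast this
    linarith
  rw [Real.le_logb_iff_rpow_le (by exact_mod_cast hb) (by exact_mod_cast hN),
    Real.rpow_natCast] at hcompl
  exact_mod_cast hcompl

/-- Lev: every subset of `F_q` (q ≥ 5 prime) missing at most `log_4 (q+2)`
elements contains an arithmetic progression of length `(q+1)/2`. -/
theorem lev_long_ap (q : ℕ) (hq : q.Prime) (hq5 : 5 ≤ q)
    (A : Finset (ZMod q))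
    (hA : (q : ℝ) - Real.logb 4 ((q : ℝ) + 2) ≤ (A.card : ℝ)) :
    ∃ x y : ZMod q, y ≠ 0 ∧ ∀ i : ℕ, i < (q + 1) / 2 → x + (i : ZMod q) * y ∈ A := by
  have : Fact q.Prime := ⟨hq⟩
  obtain hAc | ⟨a, ha⟩ := Aᶜ.eq_empty_or_nonempty
  · exact ⟨0, 1, one_ne_zero, fun i _ => by simp [(compl_eq_empty_iff A).1 hAc]⟩
  have hcard : 4 ^ #Aᶜ ≤ q + 2 :=
    pow_card_compl_le_of_le_logb (by norm_num) (by omega) (by simpa [ZMod.card] using hA)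
  have hpow : 4 ^ (#Aᶜ - 1) < q - 1 := by
    have : 4 ^ #Aᶜ = 4 ^ (#Aᶜ - 1) * 4 := by
      rw [← pow_succ, Nat.sub_add_cancel (card_pos.2 ⟨a, ha⟩)]
    omega
  set w := (q + 2) / 4
  obtain ⟨δ, hδ, hnear⟩ := exists_dilation_sub_nearZero (w := w) (by omega) ha hpow
  refine ⟨a + w * δ⁻¹, δ⁻¹, inv_ne_zero hδ, fun i hi => ?_⟩
  by_contra hiA
  have hdil : δ * (a + w * δ⁻¹ + i * δ⁻¹ - a) = ((w + i : ℕ) : ZMod q) := by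
    field_simp
    push_cast
    ring
  exact not_nearZero_natCast (Nat.le_add_right w i) (by omega)
    (hdil ▸ hnear _ (mem_compl.2 hiA))
end

section
/- Let q ≥ 3 be a prime and A ⊆ F_q with c := |F_q \ A| satisfying 2 ≤ c < q. Then there exist x, z ∈ F_q with x ≠ 0, z ∈ A, and z - x ∉ A, z + x ∉ A. -/
/-!
If there is no antipodal hole, the complement `B` of `A` is closed under midpoints. For `b ∈ B`
the map `x ↦ (x + b) / 2` is then an injection of the finite set `B` into itself, hence a
bijection, so `B` is also closed under the reflections `u ↦ 2 b - u`. Composing the reflections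
through two distinct points `b₀, b₁ ∈ B` translates by `2 (b₁ - b₀) ≠ 0`, which generates
`F_q`; hence `B = F_q`, contradicting `|B| < q`.
-/

open Set

def MidpointClosed {K : Type*} [Field K] (S : Set K) : Prop :=
  ∀ u ∈ S, ∀ v ∈ S, (u + v) / 2 ∈ S

namespace MidpointClosed

variable {K : Type*} [Field K] [NeZero (2 : K)] {S : Set K}

theorem two_mul_sub_mem (hS : MidpointClosed S) (hfin : S.Finite)
    {u v : K} (hu : u ∈ S) (hv : v ∈ S) : 2 * u - v ∈ S := by
  have hbij : BijOn (fun x ↦ (x + v) / 2) S S := by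
    refine (hfin.injOn_iff_bijOn_of_mapsTo fun x hx ↦ hS x hx v hv).mp fun x _ y _ hxy ↦ ?_
    simpa [div_left_inj' (two_ne_zero (α := K))] using hxy
  obtain ⟨x, hx, hxu⟩ := hbij.surjOn hu
  rw [← hxu]
  field_simp
  simpa using hx

theorem add_two_mul_sub_mem (hS : MidpointClosed S) (hfin : S.Finite)
    {b₀ b₁ x : K} (hb₀ : b₀ ∈ S) (hb₁ : b₁ ∈ S) (hx : x ∈ S) : x + 2 * (b₁ - b₀) ∈ S := by
  have := hS.two_mul_sub_mem hfin hb₁ (hS.two_mul_sub_mem hfin hb₀ hx)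
  convert this using 1
  ring

end MidpointClosed

theorem ZMod.eq_univ_of_add_mem {n : ℕ} [NeZero n] {S : Set (ZMod n)} {t a : ZMod n}
    (ht : IsUnit t) (ha : a ∈ S) (hadd : ∀ x ∈ S, x + t ∈ S) : S = univ := by
  have hmul : ∀ k : ℕ, a + k * t ∈ S := by
    intro k
    induction k with
    | zero => simpa using ha
    | succ k ih => simpa [add_mul, add_assoc] using hadd _ ih
  refine eq_univ_of_forall fun w ↦ ?_
  have := hmul ((w - a) * t⁻¹).val
  rwa [ZMod.natCast_zmod_val, mul_assoc, mul_comm t⁻¹, ZMod.mul_inv_of_unit t ht, mul_one,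
    add_sub_cancel] at this

theorem midpointClosed_compl_of_forall_add_mem {K : Type*} [Field K] [NeZero (2 : K)]
    {A : Set K} (hA : ∀ x z, x ≠ 0 → z ∈ A → z - x ∉ A → z + x ∈ A) :
    MidpointClosed Aᶜ := by
  intro u hu v hv hmid
  by_cases huv : u = v
  · subst huv
    exact hu (by rwa [add_self_div_two] at hmid)
  · have hx : (v - u) / 2 ≠ 0 := div_ne_zero (sub_ne_zero.mpr (Ne.symm huv)) two_ne_zero
    have hleft : (u + v) / 2 - (v - u) / 2 = u := by field_simp; ring
    have hright : (u + v) / 2 + (v - u) / 2 = v := by field_simp; ring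
    rw [← hleft] at hu
    rw [← hright] at hv
    exact hv (hA _ _ hx hmid hu)

/-- If `2 ≤ |F_q \ A| < q` then there is an antipodal hole: `z ∈ A` with
`z - x, z + x ∉ A` for some `x ≠ 0`. -/
theorem antipodal_hole (q : ℕ) [NeZero q] (hq : q.Prime) (hq3 : 3 ≤ q)
    (A : Finset (ZMod q)) (h2 : 2 ≤ Aᶜ.card) (hlt : Aᶜ.card < q) :
    ∃ x z : ZMod q, x ≠ 0 ∧ z ∈ A ∧ z - x ∉ A ∧ z + x ∉ A := by
  have : Fact q.Prime := ⟨hq⟩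
  have : NeZero (2 : ZMod q) := ⟨fun h ↦ by
    have := (ZMod.natCast_eq_zero_iff 2 q).mp (by exact_mod_cast h)
    exact absurd (Nat.le_of_dvd two_pos this) (by omega)⟩
  by_contra! hcon
  have hB : MidpointClosed ((Aᶜ : Finset (ZMod q)) : Set (ZMod q)) := by
    rw [Finset.coe_compl]
    exact midpointClosed_compl_of_forall_add_mem hcon
  obtain ⟨b₀, hb₀, b₁, hb₁, hne⟩ := Finset.one_lt_card.mp h2
  have htrans : IsUnit (2 * (b₁ - b₀)) :=
    isUnit_iff_ne_zero.mpr (mul_ne_zero two_ne_zero (sub_ne_zero.mpr hne.symm))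
  have huniv := ZMod.eq_univ_of_add_mem htrans (Finset.mem_coe.mpr hb₀)
    fun x hx ↦ hB.add_two_mul_sub_mem (Set.toFinite _) hb₀ hb₁ hx
  rw [Finset.coe_eq_univ] at huniv
  rw [huniv, Finset.card_univ, ZMod.card] at hlt
  exact lt_irrefl q hlt
end

section
/- Let q ≥ 3 be a prime and A ⊆ F_q with c := |F_q \ A| satisfying 2 ≤ c < (q+1)/2. Then there exist x, y, z ∈ F_q with x ≠ 0, y ≠ 0, z ∈ A, z - x ∉ A, z + x ∉ A, and z - y ∈ A, z + y ∈ A. -/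
/-!
Let `B` be the complement of `A`, so `2 ≤ |B| = c ≤ (q - 1) / 2`. By Cauchy–Davenport
`|B + B| ≥ 2c - 1 > c`, so some sum `b₁ + b₂` is not twice an element of `B`; its midpoint `z`
lies in `A` and `z ± x = b₁, b₂` with `x = (b₁ - b₂) / 2 ≠ 0` is an antipodal hole.
If no `y ≠ 0` had `z ± y ∈ A`, every pair `{y, -y}` of nonzero elements would meet `B - z`, and
the pair `{x, -x}` would lie inside it, forcing `2c ≥ (q - 1) + 2`.
-/

open Finset
open scoped Pointwise

theorem ZMod.exists_midpoint_notMem_of_two_le_card {p : ℕ} [Fact p.Prime] (hp2 : p ≠ 2)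
    {B : Finset (ZMod p)} (hB : 2 ≤ #B) (hBp : #B < p) :
    ∃ z x : ZMod p, z ∉ B ∧ z - x ∈ B ∧ z + x ∈ B := by
  have h2 : (2 : ZMod p) ≠ 0 := Ring.two_ne_zero (by rwa [ZMod.ringChar_zmod_n])
  have hsum : #(B.image (2 * ·)) < #(B + B) :=
    calc #(B.image (2 * ·)) ≤ #B := card_image_le
      _ < min p (#B + #B - 1) := by omega
      _ ≤ #(B + B) := ZMod.cauchy_davenport Fact.out (card_pos.1 (by omega)) (card_pos.1 (by omega))
  obtain ⟨s, hs, hsB⟩ := exists_mem_notMem_of_card_lt_card hsum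
  obtain ⟨b₁, hb₁, b₂, hb₂, rfl⟩ := mem_add.1 hs
  refine ⟨(b₁ + b₂) / 2, (b₁ - b₂) / 2, fun hz => hsB (mem_image.2 ⟨_, hz, ?_⟩), ?_, ?_⟩
  · field_simp
  · convert hb₂ using 1; field_simp; ring
  · convert hb₁ using 1; field_simp; ring

theorem Finset.card_add_one_le_two_mul_card_of_forall_mem_or_neg_mem {G : Type*} [AddCommGroup G]
    [Fintype G] [DecidableEq G] {T : Finset G} (hT : ∀ y ≠ 0, y ∈ T ∨ -y ∈ T) {x : G}
    (hx : x ≠ -x) (hxT : x ∈ T) (hnxT : -x ∈ T) : Fintype.card G + 1 ≤ 2 * #T := by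
  have hunion : #(univ \ {0} : Finset G) ≤ #(T ∪ -T) :=
    card_le_card fun y hy => by
      simpa [mem_neg] using hT y (by simpa using hy)
  have hinter : #({x, -x} : Finset G) ≤ #(T ∩ -T) :=
    card_le_card fun y hy => by
      rcases mem_insert.1 hy with rfl | hy
      · simpa [mem_neg] using ⟨hxT, hnxT⟩
      · simpa [mem_singleton.1 hy, mem_neg] using ⟨hnxT, hxT⟩
  rw [card_univ_sdiff, card_singleton] at hunion
  rw [card_pair hx] at hinter
  have := card_union_add_card_inter T (-T)
  rw [card_neg] at this
  have := Fintype.card_pos (α := G)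
  omega

/-- If `2 ≤ |F_q \ A| < (q+1)/2` then there is an antipodal hole `z ± x ∉ A`,
`z ∈ A`, together with `y ≠ 0` such that `z - y, z + y ∈ A`. -/
theorem antipodal_hole_with_pair (q : ℕ) [NeZero q] (hq : q.Prime) (hq3 : 3 ≤ q)
    (A : Finset (ZMod q)) (h2 : 2 ≤ Aᶜ.card) (hlt : Aᶜ.card < (q + 1) / 2) :
    ∃ x y z : ZMod q, x ≠ 0 ∧ y ≠ 0 ∧ z ∈ A ∧ z - x ∉ A ∧ z + x ∉ A ∧
      z - y ∈ A ∧ z + y ∈ A := by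
  have : Fact q.Prime := ⟨hq⟩
  obtain ⟨z, x, hz, hzx₁, hzx₂⟩ :=
    ZMod.exists_midpoint_notMem_of_two_le_card (by omega) h2 (by omega)
  simp only [mem_compl] at hz hzx₁ hzx₂
  have hzA : z ∈ A := not_not.1 hz
  have hx : x ≠ 0 := by rintro rfl; simp_all
  by_contra! hpair
  set T := Aᶜ.map (Equiv.subRight z).toEmbedding
  have hT : ∀ y, y ∈ T ↔ z + y ∉ A := by simp [T, add_comm]
  have hcover : ∀ y ≠ 0, y ∈ T ∨ -y ∈ T := by
    intro y hy
    by_contra! h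
    simp only [hT, not_not, ← sub_eq_add_neg] at h
    exact hpair x y z hx hy hzA hzx₁ hzx₂ h.2 h.1
  have hcard := card_add_one_le_two_mul_card_of_forall_mem_or_neg_mem hcover
    (ZMod.ne_neg_self (hq.odd_of_ne_two (by omega)) hx)
    ((hT x).2 hzx₂) ((hT _).2 (by rwa [← sub_eq_add_neg]))
  rw [card_map, ZMod.card] at hcard
  omega
end

section
/- Let q ≥ 11 be a prime and A ⊆ F_q with |F_q \ A| = (q+1)/2. Then A contains a nontrivial 3-term arithmetic progression, i.e., there exist a ∈ F_q and d ∈ F_q with d ≠ 0 such that a, a+d, a+2d ∈ A. -/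
/-!
Write `q = 2n + 5`, so `|A| = n + 2`. If `A` has no nontrivial 3-term progression, no sum
`a + c` of distinct elements of `A` is of the form `b + b` with `b ∈ A`, so the restricted sumset
`A ∔ A` has at most `q - |A| = n + 3` elements. On the other hand the Alon–Nathanson–Ruzsa
polynomial method gives `|A ∔ B| ≥ 2n + 1` for `B = A \ {a₀}`: if `g` is monic of degree `2n`
and vanishes on `A ∔ B`, then `(x - y) g(x + y)` vanishes on `A × B`, while its coefficient of
`x^(n+1) y^n` is `C(2n, n) - C(2n, n+1)`, the Catalan number `C(2n, n)/(n + 1)`, which is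
nonzero mod `q`. Since `2n + 1 > n + 3` for `n ≥ 3`, this is a contradiction.
-/

open Polynomial Finset

namespace Lagrange

variable {F : Type*} [Field F] [DecidableEq F]

theorem coeff_basis_card_sub_one (s : Finset F) {a : F} (ha : a ∈ s) :
    (Lagrange.basis s id a).coeff (#s - 1) = nodalWeight s id a := by
  rw [basis_eq_prod_sub_inv_mul_nodal_div ha, ← nodal_erase_eq_nodal_div ha, coeff_C_mul]
  have hdeg : (nodal (s.erase a) id).natDegree = #s - 1 := by
    rw [natDegree_nodal, card_erase_of_mem ha]
  rw [← hdeg, nodal_monic.coeff_natDegree, mul_one]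

theorem sum_nodalWeight_mul_pow (s : Finset F) {i : ℕ} (hi : i < #s) :
    ∑ a ∈ s, nodalWeight s id a * a ^ i = if i + 1 = #s then 1 else 0 := by
  have hdeg : (X ^ i : F[X]).degree < #s := by
    rw [degree_X_pow]; exact_mod_cast hi
  have hcoeff := congrArg (coeff · (#s - 1)) (eq_interpolate (Set.injOn_id _) hdeg)
  simp only [interpolate_apply, finsetSum_coeff, coeff_C_mul, coeff_X_pow, eval_pow, eval_X,
    id_eq] at hcoeff
  rw [sum_congr rfl fun a ha => by rw [coeff_basis_card_sub_one s ha, mul_comm]] at hcoeff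
  rw [← hcoeff]
  exact if_congr (by omega) rfl rfl

/-- Coefficient formula of the Combinatorial Nullstellensatz for monomials: the weighted sum over
`A × B` of a polynomial of total degree `≤ |A| + |B| - 2` is its coefficient of
`x^(|A|-1) y^(|B|-1)`. -/
theorem sum_sum_nodalWeight_mul_pow_mul_pow (A B : Finset F) {i j : ℕ}
    (hij : i + j + 2 ≤ #A + #B) :
    ∑ a ∈ A, ∑ b ∈ B, nodalWeight A id a * nodalWeight B id b * (a ^ i * b ^ j) =
      if i + 1 = #A ∧ j + 1 = #B then 1 else 0 := by
  trans (∑ a ∈ A, nodalWeight A id a * a ^ i) * ∑ b ∈ B, nodalWeight B id b * b ^ j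
  · rw [sum_mul_sum]
    exact sum_congr rfl fun _ _ => sum_congr rfl fun _ _ => by ring
  rcases lt_trichotomy (i + 1) #A with h | h | h
  · rw [sum_nodalWeight_mul_pow A (by omega), if_neg h.ne, zero_mul, if_neg (by omega)]
  · rw [sum_nodalWeight_mul_pow A (by omega), sum_nodalWeight_mul_pow B (by omega)]
    simp [h]
  · rw [sum_nodalWeight_mul_pow B (i := j) (by omega), if_neg (by omega), mul_zero,
      if_neg (by omega)]

theorem sum_sum_nodalWeight_mul_sub_mul_add_pow {A B : Finset F} {m n r : ℕ}
    (hA : #A = m + 2) (hB : #B = n + 1) (hr : r ≤ m + n) :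
    ∑ a ∈ A, ∑ b ∈ B, nodalWeight A id a * nodalWeight B id b * ((a - b) * (a + b) ^ r) =
      if r = m + n then ((m + n).choose m - (m + n).choose (m + 1) : F) else 0 := by
  have hexpand : ∀ a b : F, (a - b) * (a + b) ^ r =
      ∑ u ∈ range (r + 1),
        (r.choose u : F) * (a ^ (u + 1) * b ^ (r - u) - a ^ u * b ^ (r - u + 1)) := by
    intro a b
    rw [add_pow, mul_sum]
    exact sum_congr rfl fun u _ => by ring
  have hmonomial : ∀ u ∈ range (r + 1),
      ∑ a ∈ A, ∑ b ∈ B, nodalWeight A id a * nodalWeight B id b *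
        ((r.choose u : F) * (a ^ (u + 1) * b ^ (r - u) - a ^ u * b ^ (r - u + 1))) =
      (if u = m ∧ r = m + n then (r.choose u : F) else 0) -
        if u = m + 1 ∧ r = m + n then (r.choose u : F) else 0 := by
    intro u hu
    rw [mem_range] at hu
    simp only [mul_sub, mul_left_comm _ (r.choose u : F), sum_sub_distrib, ← mul_sum]
    rw [sum_sum_nodalWeight_mul_pow_mul_pow A B (by omega),
      sum_sum_nodalWeight_mul_pow_mul_pow A B (by omega), hA, hB]
    simp only [mul_ite, mul_one, mul_zero]
    congr 1 <;> exact if_congr (by omega) rfl rfl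
  simp only [hexpand, mul_sum]
  rw [sum_congr rfl fun a _ => sum_comm, sum_comm, sum_congr rfl hmonomial]
  by_cases hrmn : r = m + n
  · simp only [hrmn, and_true, sum_sub_distrib, sum_ite_eq', mem_range, if_true]
    rw [if_pos (by omega : m < m + n + 1)]
    split_ifs with hn
    · rfl
    · rw [Nat.choose_eq_zero_of_lt (by omega : m + n < m + 1), Nat.cast_zero]
  · simp [hrmn]

theorem sum_sum_nodalWeight_mul_sub_mul_eval_add {A B : Finset F} {m n : ℕ}
    (hA : #A = m + 2) (hB : #B = n + 1) {g : F[X]} (hg : g.Monic) (hdeg : g.natDegree = m + n) :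
    ∑ a ∈ A, ∑ b ∈ B, nodalWeight A id a * nodalWeight B id b * ((a - b) * g.eval (a + b)) =
      (m + n).choose m - (m + n).choose (m + 1) := by
  simp only [eval_eq_sum_range, hdeg, mul_sum, mul_left_comm _ (g.coeff _)]
  rw [sum_congr rfl fun a _ => sum_comm, sum_comm]
  simp only [← mul_sum]
  rw [sum_congr rfl fun r hr => by
    rw [sum_sum_nodalWeight_mul_sub_mul_add_pow hA hB (Nat.lt_succ_iff.1 (mem_range.1 hr))]]
  simp only [mul_ite, mul_zero, sum_ite_eq', mem_range, Nat.lt_succ_self, if_true]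
  rw [← hdeg, hg.coeff_natDegree, one_mul]

end Lagrange

namespace Finset

variable {α : Type*} [DecidableEq α]

def restrictedSumset [Add α] (A B : Finset α) : Finset α :=
  ((A ×ˢ B).filter fun p => p.1 ≠ p.2).image fun p => p.1 + p.2

theorem mem_restrictedSumset [Add α] {A B : Finset α} {x : α} :
    x ∈ restrictedSumset A B ↔ ∃ a ∈ A, ∃ b ∈ B, a ≠ b ∧ a + b = x := by
  simp [restrictedSumset, and_assoc]

theorem add_mem_restrictedSumset [Add α] {A B : Finset α} {a b : α} (ha : a ∈ A) (hb : b ∈ B)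
    (hab : a ≠ b) : a + b ∈ restrictedSumset A B :=
  mem_restrictedSumset.2 ⟨a, ha, b, hb, hab, rfl⟩

theorem restrictedSumset_subset_restrictedSumset_right [Add α] {A B B' : Finset α}
    (h : B ⊆ B') : restrictedSumset A B ⊆ restrictedSumset A B' := by
  intro x hx
  obtain ⟨a, ha, b, hb, hab, rfl⟩ := mem_restrictedSumset.1 hx
  exact add_mem_restrictedSumset ha (h hb) hab

end Finset

open Lagrange in
theorem add_add_one_le_card_restrictedSumset {F : Type*} [Field F] [DecidableEq F]
    {A B : Finset F} {m n : ℕ} (hA : #A = m + 2) (hB : #B = n + 1)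
    (hchoose : ((m + n).choose m : F) ≠ (m + n).choose (m + 1)) :
    m + n + 1 ≤ #(restrictedSumset A B) := by
  by_contra! hsmall
  set S := restrictedSumset A B
  set g : F[X] := nodal S id * X ^ (m + n - #S)
  have hg : g.Monic := nodal_monic.mul (monic_X_pow _)
  have hdeg : g.natDegree = m + n := by
    rw [nodal_monic.natDegree_mul (monic_X_pow _), natDegree_nodal, natDegree_X_pow]
    omega
  have hvanish : ∀ a ∈ A, ∀ b ∈ B, (a - b) * g.eval (a + b) = 0 := by
    intro a ha b hb
    by_cases hab : a = b
    · rw [hab, sub_self, zero_mul]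
    · have hroot : (nodal S id).eval (a + b) = 0 :=
        eval_nodal_at_node (s := S) (v := id) (add_mem_restrictedSumset ha hb hab)
      rw [eval_mul, hroot, zero_mul, mul_zero]
  apply hchoose
  rw [← sub_eq_zero, ← sum_sum_nodalWeight_mul_sub_mul_eval_add hA hB hg hdeg]
  exact sum_eq_zero fun a ha => sum_eq_zero fun b hb => by rw [hvanish a ha b hb, mul_zero]

theorem cast_choose_ne_cast_choose_succ (F : Type*) [Field F] {p : ℕ} [CharP F p] (hp : p.Prime)
    {n : ℕ} (hn : 2 * n < p) : ((2 * n).choose n : F) ≠ (2 * n).choose (n + 1) := by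
  intro h
  have hrec := congrArg (Nat.cast : ℕ → F) (Nat.choose_succ_right_eq (2 * n) n)
  rw [show 2 * n - n = n by omega] at hrec
  push_cast at hrec
  rw [← h, mul_add, mul_one, add_eq_left, CharP.cast_eq_zero_iff F p] at hrec
  exact hp.coprime_iff_not_dvd.1 (hp.coprime_choose_of_lt hn (by omega)) hrec

theorem threeAPFree_of_forall_add_two_mul_notMem {R : Type*} [CommRing R] {A : Set R}
    (hA : ∀ a d : R, d ≠ 0 → a ∈ A → a + d ∈ A → a + 2 * d ∉ A) :
    ThreeAPFree A := by
  intro a ha b hb c hc habc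
  by_contra hab
  refine hA a (b - a) (sub_ne_zero.2 (Ne.symm hab)) ha (by rwa [add_sub_cancel]) ?_
  rwa [show a + 2 * (b - a) = c by linear_combination -habc]

section ThreeAPFree

variable {α : Type*} [AddCancelCommMonoid α] [DecidableEq α] {A : Finset α}

theorem ThreeAPFree.disjoint_restrictedSumset_image_add_self (hA : ThreeAPFree (A : Set α)) :
    Disjoint (restrictedSumset A A) (A.image fun y => y + y) := by
  rw [disjoint_left]
  intro x hx hy
  obtain ⟨a, ha, c, hc, hac, rfl⟩ := mem_restrictedSumset.1 hx
  obtain ⟨b, hb, hbb⟩ := mem_image.1 hy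
  obtain rfl := hA ha hb hc hbb.symm
  exact hac (add_left_cancel hbb)

theorem ThreeAPFree.card_restrictedSumset_add_card_le [Fintype α]
    (hdouble : Function.Injective fun y : α => y + y) (hA : ThreeAPFree (A : Set α)) :
    #(restrictedSumset A A) + #A ≤ Fintype.card α := by
  rw [← card_image_of_injective A hdouble,
    ← card_union_of_disjoint hA.disjoint_restrictedSumset_image_add_self]
  exact card_le_univ _

end ThreeAPFree

/-- A subset of `F_q` (q ≥ 11 prime) whose complement has size `(q+1)/2`
contains a nontrivial 3-term arithmetic progression. -/
theorem middle_three_ap (q : ℕ) [NeZero q] (hq : q.Prime) (hq11 : 11 ≤ q)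
    (A : Finset (ZMod q)) (hA : Aᶜ.card = (q + 1) / 2) :
    ∃ a d : ZMod q, d ≠ 0 ∧ a ∈ A ∧ a + d ∈ A ∧ a + 2 * d ∈ A := by
  have := Fact.mk hq
  obtain ⟨n, rfl⟩ : ∃ n, q = 2 * n + 5 :=
    ⟨q / 2 - 2, by have := Nat.odd_iff.1 (hq.odd_of_ne_two (by omega)); omega⟩
  have hAcard : #A = n + 2 := by
    have := card_compl A
    rw [ZMod.card] at this
    omega
  by_contra! hfree
  have h2 : (2 : ZMod (2 * n + 5)) ≠ 0 := Ring.two_ne_zero (by rw [ZMod.ringChar_zmod_n]; omega)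
  have hAP : ThreeAPFree (A : Set (ZMod (2 * n + 5))) :=
    threeAPFree_of_forall_add_two_mul_notMem hfree
  have hupper := hAP.card_restrictedSumset_add_card_le
    fun x y hxy => mul_left_cancel₀ h2 (by simpa only [two_mul] using hxy)
  rw [ZMod.card] at hupper
  obtain ⟨a₀, ha₀⟩ : A.Nonempty := card_pos.1 (by omega)
  have hlower : n + n + 1 ≤ #(restrictedSumset A (A.erase a₀)) :=
    add_add_one_le_card_restrictedSumset hAcard (by rw [card_erase_of_mem ha₀, hAcard]; rfl)
      (by rw [← two_mul]; exact cast_choose_ne_cast_choose_succ _ hq (by omega))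
  have hmono : #(restrictedSumset A (A.erase a₀)) ≤ #(restrictedSumset A A) :=
    card_le_card (restrictedSumset_subset_restrictedSumset_right (erase_subset a₀ A))
  omega
end

section
/- Let q ≥ 3 be a prime. There is no subset B of F_q with 2 ≤ |B| < q and |B| odd such that for every z ∈ B, the set B \ {z} is a disjoint union of (|B|-1)/2 pairs {u, v} with u + v = 2z. -/
/-- No subset `B` of `F_q` with `2 ≤ |B| < q` of odd cardinality admits, for
every `z ∈ B`, a partition of `B \ {z}` into pairs `{u, v}` with `u + v = 2z`
(formalized via a fixed-point-free pairing involution). -/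
theorem no_centered_pairing (q : ℕ) (hq : q.Prime) (hq3 : 3 ≤ q)
    (B : Finset (ZMod q)) (h2 : 2 ≤ B.card) (hlt : B.card < q)
    (hodd : Odd B.card) :
    ¬ ∀ z ∈ B, ∃ f : ZMod q → ZMod q,
        ∀ u ∈ B.erase z, f u ∈ B.erase z ∧ f (f u) = u ∧ f u ≠ u ∧
          u + f u = 2 * z := by
  intro H
  haveI : Fact q.Prime := ⟨hq⟩
  -- key: for each z ∈ B, ∑ u in B, u = card B • z
  have key : ∀ z ∈ B, ∑ u ∈ B, u = (B.card : ZMod q) * z := by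
    intro z hz
    obtain ⟨f, hf⟩ := H z hz
    have hsum : ∑ u ∈ B.erase z, (u - z) = 0 := by
      refine Finset.sum_involution (fun a _ => f a) ?_ ?_ (fun a ha => (hf a ha).1)
        (fun a ha => (hf a ha).2.1)
      · intro a ha
        linear_combination (hf a ha).2.2.2
      · intro a ha _
        exact (hf a ha).2.2.1
    have := Finset.sum_sub_distrib (s := B.erase z) (f := fun u => u) (g := fun _ => z)
    rw [this] at hsum
    have hcard : (B.erase z).card = B.card - 1 := Finset.card_erase_of_mem hz
    have hsum2 : ∑ u ∈ B.erase z, u = ((B.card - 1 : ℕ) : ZMod q) * z := by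
      have := sub_eq_zero.mp hsum
      rw [this, Finset.sum_const, hcard, nsmul_eq_mul]
    have := Finset.add_sum_erase B (fun u => u) hz
    rw [← this, hsum2]
    have h1 : 1 ≤ B.card := le_trans (by norm_num) h2
    push_cast [Nat.cast_sub h1]
    ring
  -- get two distinct elements
  obtain ⟨z, hz, z', hz', hne⟩ := Finset.one_lt_card.mp h2
  have heq : (B.card : ZMod q) * z = (B.card : ZMod q) * z' := by
    rw [← key z hz, key z' hz']
  have hcard0 : (B.card : ZMod q) ≠ 0 := by
    rw [Ne, ZMod.natCast_eq_zero_iff]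
    intro hdvd
    have := Nat.le_of_dvd (by omega) hdvd
    omega
  exact hne (mul_left_cancel₀ hcard0 heq)
end

section
/- Let q ≥ 3 be a prime, and let A ⊆ F_q. Suppose there exist vectors v_1, ..., v_{m'} in F_q^n and disjoint nonempty subsets S_1, ..., S_m of {1,...,m'} with coefficients α_j ∈ {1,2} for j ∈ ∪S_i such that for each i, Σ_{j ∈ S_i} α_j v_j = 0. Suppose further that for the vectors u'_i := Σ_{j ∈ S_i, α_j = 2} v_j (i = 1, ..., m), there exist coefficients ε_i ∈ {-1, 0, 1}, not all zero, with Σ_i ε_i u'_i = 0. If additionally for every i there exist j, j' ∈ S_i with α_j = 1 and α_{j'} = 2, then there exists a nonempty subset T of {1, ..., m'} with Σ_{j ∈ T} v_j = 0. -/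
/-!
On a block `S` where every coefficient is `1` or `2`, `∑ α j • v j = ∑ v j + ∑_{α j = 2} v j`,
so the relation `∑ α j • v j = 0` says that the whole block sums to `-u'`, where `u'` is the
sum of its `α = 2` part. Hence `ε • u'` is the sum of the `α = 2` part when `ε = 1` and of the
whole block when `ε = -1`; taking the union of these disjoint pieces turns `∑ ε i • u'_i = 0`
into a subset-zero-sum, which is nonempty because it contains the `α = 2` part of a block
with `ε i ≠ 0`.
-/

open Finset

section Block

variable {ι R M : Type*} [DecidableEq R]

theorem sum_smul_eq_sum_add_sum_filter_two [Semiring R] [AddCommMonoid M] [Module R M]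
    {S : Finset ι} {α : ι → R} (v : ι → M) (hα : ∀ j ∈ S, α j = 1 ∨ α j = 2) :
    ∑ j ∈ S, α j • v j = ∑ j ∈ S, v j + ∑ j ∈ S with α j = 2, v j := by
  rw [sum_filter, ← sum_add_distrib]
  refine sum_congr rfl fun j hj => ?_
  by_cases h2 : α j = 2
  · rw [if_pos h2, h2, two_smul]
  · rw [if_neg h2, add_zero, (hα j hj).resolve_right h2, one_smul]

variable [Ring R] [AddCommGroup M] [Module R M]

theorem sum_eq_neg_sum_filter_two {S : Finset ι} {α : ι → R} {v : ι → M}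
    (hα : ∀ j ∈ S, α j = 1 ∨ α j = 2) (hzero : ∑ j ∈ S, α j • v j = 0) :
    ∑ j ∈ S, v j = -∑ j ∈ S with α j = 2, v j := by
  rw [sum_smul_eq_sum_add_sum_filter_two v hα] at hzero
  exact eq_neg_of_add_eq_zero_left hzero

def signedPart (S : Finset ι) (α : ι → R) (e : ℤ) : Finset ι :=
  if e = 1 then {j ∈ S | α j = 2} else if e = -1 then S else ∅

theorem signedPart_subset (S : Finset ι) (α : ι → R) (e : ℤ) : signedPart S α e ⊆ S := by
  unfold signedPart
  split_ifs
  exacts [filter_subset _ _, Subset.refl _, empty_subset _]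

theorem filter_two_subset_signedPart (S : Finset ι) (α : ι → R) {e : ℤ} (he : |e| ≤ 1)
    (he0 : e ≠ 0) : {j ∈ S | α j = 2} ⊆ signedPart S α e := by
  obtain rfl | rfl : e = 1 ∨ e = -1 := by
    rcases abs_le.mp he with ⟨_, _⟩
    omega
  · simp [signedPart]
  · simp [signedPart, filter_subset]

theorem sum_signedPart {S : Finset ι} {α : ι → R} {v : ι → M}
    (hα : ∀ j ∈ S, α j = 1 ∨ α j = 2) (hzero : ∑ j ∈ S, α j • v j = 0)
    {e : ℤ} (he : |e| ≤ 1) :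
    ∑ j ∈ signedPart S α e, v j = (e : R) • ∑ j ∈ S with α j = 2, v j := by
  obtain rfl | rfl | rfl : e = 1 ∨ e = 0 ∨ e = -1 := by
    rcases abs_le.mp he with ⟨_, _⟩
    omega
  · simp [signedPart]
  · simp [signedPart]
  · simp [signedPart, sum_eq_neg_sum_filter_two hα hzero]

end Block

theorem subset_sum_from_012_general (q : ℕ)
    (n m m' : ℕ) (v : Fin m' → Fin n → ZMod q)
    (S : Fin m → Finset (Fin m'))
    (hdisj : ∀ i i' : Fin m, i ≠ i' → Disjoint (S i) (S i'))
    (α : Fin m' → ZMod q)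
    (hα : ∀ i, ∀ j ∈ S i, α j = 1 ∨ α j = 2)
    (hzero : ∀ i, ∑ j ∈ S i, α j • v j = 0)
    (ε : Fin m → ℤ) (hε : ∀ i, |ε i| ≤ 1) (hεne : ε ≠ 0)
    (hεsum : ∑ i, (ε i : ZMod q) •
        (∑ j ∈ (S i).filter fun j => α j = 2, v j) = 0)
    (hmix : ∀ i, (∃ j ∈ S i, α j = 1) ∧ ∃ j' ∈ S i, α j' = 2) :
    ∃ T : Finset (Fin m'), T.Nonempty ∧ ∑ j ∈ T, v j = 0 := by
  refine ⟨univ.biUnion fun i => signedPart (S i) α (ε i), ?_, ?_⟩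
  · obtain ⟨i, hi⟩ := Function.ne_iff.mp hεne
    obtain ⟨j, hj, hj2⟩ := (hmix i).2
    have hj' : j ∈ signedPart (S i) α (ε i) :=
      filter_two_subset_signedPart (S i) α (hε i) hi (mem_filter.mpr ⟨hj, hj2⟩)
    exact ⟨j, mem_biUnion.mpr ⟨i, mem_univ i, hj'⟩⟩
  · have hpairwise : Set.PairwiseDisjoint ↑(univ : Finset (Fin m))
        fun i => signedPart (S i) α (ε i) := fun i _ i' _ hii' =>
      (hdisj i i' hii').mono (signedPart_subset _ _ _) (signedPart_subset _ _ _)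
    rw [sum_biUnion hpairwise, ← hεsum]
    exact sum_congr rfl fun i _ => sum_signedPart (hα i) (hzero i) (hε i)

/-- Combining disjoint `(0,1,2)`-zero-sums with a `(±1)`-zero-sum of the
`α = 2` parts yields a subset-zero-sum of the original vectors. -/
theorem subset_sum_from_012 (q : ℕ) (hq : q.Prime) (hq3 : 3 ≤ q)
    (n m m' : ℕ) (v : Fin m' → Fin n → ZMod q)
    (S : Fin m → Finset (Fin m'))
    (hdisj : ∀ i i' : Fin m, i ≠ i' → Disjoint (S i) (S i'))
    (hne : ∀ i, (S i).Nonempty)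
    (α : Fin m' → ZMod q)
    (hα : ∀ i, ∀ j ∈ S i, α j = 1 ∨ α j = 2)
    (hzero : ∀ i, ∑ j ∈ S i, α j • v j = 0)
    (ε : Fin m → ℤ) (hε : ∀ i, |ε i| ≤ 1) (hεne : ε ≠ 0)
    (hεsum : ∑ i, (ε i : ZMod q) •
        (∑ j ∈ (S i).filter fun j => α j = 2, v j) = 0)
    (hmix : ∀ i, (∃ j ∈ S i, α j = 1) ∧ ∃ j' ∈ S i, α j' = 2) :
    ∃ T : Finset (Fin m'), T.Nonempty ∧ ∑ j ∈ T, v j = 0 :=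
  subset_sum_from_012_general q n m m' v S hdisj α hα hzero ε hε hεne hεsum hmix
end

section
/- Let q be a prime and let β_1, ..., β_d be independent uniformly random elements of F_q. Then the probability that no nonempty subset T ⊆ {1,...,d} satisfies Σ_{j∈T} β_j = 1 is at most (q-1)/(2^d - 1). -/
/-!
Let `X β` count the nonempty `T` with `∑ j ∈ T, β j = c`. The subset sum over a nonempty `T` is a
surjective homomorphism `(ι → G) → G`, and for `T ≠ S` the pair of subset sums is surjective onto
`G × G`; so the events have probability `p = 1 / |G|` and are pairwise independent. Hence
`E X = n p` and `Var X = n p (1 - p)` with `n = 2 ^ |ι| - 1`, and Chebyshev's inequality gives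
`P(X = 0) ≤ Var X / (E X) ^ 2 = (|G| - 1) / n`.
-/

open Finset Function

namespace AddMonoidHom

theorem card_fiber_mul_card_of_surjective {G H : Type*} [AddGroup G] [Fintype G] [AddMonoid H]
    [Fintype H] [DecidableEq H] (f : G →+ H) (hf : Surjective f) (x : H) :
    #{g | f g = x} * Fintype.card H = Fintype.card G := by
  rw [← card_univ (α := G), card_eq_sum_card_fiberwise (s := univ) (t := univ)
      fun g _ => mem_univ (f g),
    sum_congr rfl fun y _ => card_fiber_eq_of_mem_range f (hf y) (hf x), sum_const, card_univ,
    smul_eq_mul, mul_comm]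

end AddMonoidHom

section SecondMoment

variable {Ω ι : Type*} [Fintype Ω] [DecidableEq Ω] (I : Finset ι) (A : ι → Finset Ω)

theorem sum_sum_ite_mem :
    ∑ ω, ∑ i ∈ I, (if ω ∈ A i then (1 : ℝ) else 0) = ∑ i ∈ I, (#(A i) : ℝ) := by
  rw [sum_comm]
  simp

theorem sum_sq_sum_ite_mem :
    ∑ ω, (∑ i ∈ I, (if ω ∈ A i then (1 : ℝ) else 0)) ^ 2 =
      ∑ i ∈ I, ∑ j ∈ I, (#(A i ∩ A j) : ℝ) := by
  simp_rw [sq, sum_mul_sum, ite_zero_mul_ite_zero, one_mul, ← mem_inter]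
  rw [sum_comm]
  refine sum_congr rfl fun i _ => ?_
  rw [sum_comm]
  simp only [sum_boole, filter_mem_eq_inter, univ_inter]

theorem card_compl_biUnion_mul_sq_le (p : ℝ)
    (h_single : ∀ i ∈ I, (#(A i) : ℝ) = p * Fintype.card Ω)
    (h_pair : ∀ i ∈ I, ∀ j ∈ I, i ≠ j → (#(A i ∩ A j) : ℝ) = p ^ 2 * Fintype.card Ω) :
    (#(I.biUnion A)ᶜ : ℝ) * (#I * p) ^ 2 ≤ #I * p * (1 - p) * Fintype.card Ω := by
  classical
  set X : Ω → ℝ := fun ω => ∑ i ∈ I, if ω ∈ A i then 1 else 0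
  set μ : ℝ := #I * p
  have hX : ∑ ω, X ω = μ * Fintype.card Ω := by
    rw [sum_sum_ite_mem, sum_congr rfl h_single, sum_const, nsmul_eq_mul, mul_assoc]
  have hX_sq : ∑ ω, X ω ^ 2 = μ * Fintype.card Ω + #I * (#I - 1) * p ^ 2 * Fintype.card Ω := by
    have h_row : ∀ i ∈ I, ∑ j ∈ I, (#(A i ∩ A j) : ℝ) =
        p * Fintype.card Ω + (#I - 1) * (p ^ 2 * Fintype.card Ω) := by
      intro i hi
      rw [← add_sum_erase I _ hi, inter_self, h_single i hi,
        sum_congr rfl fun j hj => h_pair i hi j (mem_of_mem_erase hj) (ne_of_mem_erase hj).symm,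
        sum_const, nsmul_eq_mul, card_erase_of_mem hi, Nat.cast_pred (card_pos.2 ⟨i, hi⟩)]
    rw [sum_sq_sum_ite_mem, sum_congr rfl h_row, sum_const, nsmul_eq_mul]
    ring
  have hX_zero : ∀ ω ∈ (I.biUnion A)ᶜ, X ω = 0 := by
    intro ω hω
    refine sum_eq_zero fun i hi => if_neg fun h => mem_compl.1 hω (mem_biUnion.2 ⟨i, hi, h⟩)
  calc (#(I.biUnion A)ᶜ : ℝ) * μ ^ 2 = ∑ ω ∈ (I.biUnion A)ᶜ, (X ω - μ) ^ 2 := by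
        rw [sum_congr rfl fun ω hω => by rw [hX_zero ω hω], sum_const, nsmul_eq_mul]
        ring
    _ ≤ ∑ ω, (X ω - μ) ^ 2 := sum_le_sum_of_subset_of_nonneg (subset_univ _)
        fun _ _ _ => sq_nonneg _
    _ = ∑ ω, X ω ^ 2 - 2 * μ * ∑ ω, X ω + μ ^ 2 * Fintype.card Ω := by
        simp only [sub_sq, sum_add_distrib, sum_sub_distrib, ← sum_mul, ← mul_sum, sum_const,
          card_univ, nsmul_eq_mul]
        ring
    _ = #I * p * (1 - p) * Fintype.card Ω := by
        rw [hX, hX_sq]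
        ring

end SecondMoment

section SubsetSum

variable {ι G : Type*} [AddCommGroup G]

def subsetSumHom (T : Finset ι) : (ι → G) →+ G :=
  ∑ j ∈ T, Pi.evalAddMonoidHom (fun _ => G) j

@[simp]
theorem subsetSumHom_apply (T : Finset ι) (β : ι → G) : subsetSumHom T β = ∑ j ∈ T, β j := by
  simp [subsetSumHom]

variable [DecidableEq ι]

theorem subsetSumHom_surjective {T : Finset ι} (hT : T.Nonempty) :
    Surjective (subsetSumHom T : (ι → G) →+ G) := by
  obtain ⟨j, hj⟩ := hT
  exact fun c => ⟨Pi.single j c, by simp [hj]⟩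

theorem subsetSumHom_prod_surjective {T S : Finset ι} (hT : T.Nonempty) (hS : S.Nonempty)
    (hTS : T ≠ S) :
    Surjective ((subsetSumHom T).prod (subsetSumHom S) : (ι → G) →+ G × G) := by
  wlog hT_not_sub : ¬ T ⊆ S generalizing T S
  · have hS_not_sub : ¬ S ⊆ T := fun h => hTS (subset_antisymm (not_not.1 hT_not_sub) h)
    refine fun ⟨a, b⟩ => ?_
    obtain ⟨β, hβ⟩ := this hS hT hTS.symm hS_not_sub (b, a)
    exact ⟨β, Prod.ext (congr_arg Prod.snd hβ) (congr_arg Prod.fst hβ)⟩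
  obtain ⟨j₀, hj₀T, hj₀S⟩ := not_subset.1 hT_not_sub
  obtain ⟨j₁, hj₁⟩ := hS
  -- the `j₀`-coordinate, with `j₀ ∈ T \ S`, corrects the `T`-sum without moving the `S`-sum
  refine fun ⟨a, b⟩ => ⟨Pi.single j₁ b + Pi.single j₀ (a - ∑ j ∈ T, Pi.single j₁ b j), ?_⟩
  simp [sum_add_distrib, hj₀T, hj₀S, hj₁]

theorem card_filter_sum_eq_mul_card [Fintype ι] [Fintype G] [DecidableEq G] {T : Finset ι}
    (hT : T.Nonempty) (a : G) :
    #{β : ι → G | ∑ j ∈ T, β j = a} * Fintype.card G = Fintype.card G ^ Fintype.card ι := by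
  simpa using (subsetSumHom T).card_fiber_mul_card_of_surjective (subsetSumHom_surjective hT) a

theorem card_filter_sum_eq_and_sum_eq_mul_card [Fintype ι] [Fintype G] [DecidableEq G]
    {T S : Finset ι} (hT : T.Nonempty) (hS : S.Nonempty) (hTS : T ≠ S) (a b : G) :
    #{β : ι → G | ∑ j ∈ T, β j = a ∧ ∑ j ∈ S, β j = b} * Fintype.card G ^ 2 =
      Fintype.card G ^ Fintype.card ι := by
  simpa [Prod.ext_iff, sq] using
    ((subsetSumHom T).prod (subsetSumHom S)).card_fiber_mul_card_of_surjective
      (subsetSumHom_prod_surjective hT hS hTS) (a, b)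

theorem card_filter_nonempty [Fintype ι] :
    #{T : Finset ι | T.Nonempty} = 2 ^ Fintype.card ι - 1 := by
  have h : ({T | T.Nonempty} : Finset (Finset ι)) = univ.erase ∅ := by
    ext T
    simp [nonempty_iff_ne_empty]
  rw [h, card_erase_of_mem (mem_univ ∅), card_univ, Fintype.card_finset]

theorem card_not_exists_subset_sum_eq_div_le [Fintype ι] [Nonempty ι] [Fintype G] [DecidableEq G]
    (c : G) :
    (#{β : ι → G | ¬ ∃ T : Finset ι, T.Nonempty ∧ ∑ j ∈ T, β j = c} : ℝ) /
        Fintype.card G ^ Fintype.card ι ≤ (Fintype.card G - 1) / (2 ^ Fintype.card ι - 1) := by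
  set I : Finset (Finset ι) := {T | T.Nonempty}
  set A : Finset ι → Finset (ι → G) := fun T => {β | ∑ j ∈ T, β j = c}
  have h_single : ∀ T ∈ I, (#(A T) : ℝ) = (Fintype.card G : ℝ)⁻¹ * Fintype.card (ι → G) := by
    intro T hT
    simp only [A]
    rw [Fintype.card_fun, ← card_filter_sum_eq_mul_card (mem_filter.1 hT).2 c]
    push_cast
    field_simp
  have h_pair : ∀ T ∈ I, ∀ S ∈ I, T ≠ S →
      (#(A T ∩ A S) : ℝ) = (Fintype.card G : ℝ)⁻¹ ^ 2 * Fintype.card (ι → G) := by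
    intro T hT S hS hTS
    rw [← filter_and, Fintype.card_fun,
      ← card_filter_sum_eq_and_sum_eq_mul_card (mem_filter.1 hT).2 (mem_filter.1 hS).2 hTS c c]
    push_cast
    field_simp
  have h_bad : ({β | ¬ ∃ T : Finset ι, T.Nonempty ∧ ∑ j ∈ T, β j = c} : Finset (ι → G)) =
      (I.biUnion A)ᶜ := by
    ext β
    simp [I, A]
  have hI : (#I : ℝ) = 2 ^ Fintype.card ι - 1 := by
    rw [card_filter_nonempty, Nat.cast_sub Nat.one_le_two_pow]
    push_cast
    ring
  have hI_pos : (0 : ℝ) < #I := by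
    rw [hI, sub_pos]
    exact one_lt_pow₀ one_lt_two Fintype.card_ne_zero
  have h := card_compl_biUnion_mul_sq_le I A _ h_single h_pair
  rw [Fintype.card_fun] at h
  rw [h_bad, ← hI, div_le_div_iff₀ (by positivity) hI_pos]
  have h_scaled : (#(I.biUnion A)ᶜ : ℝ) * #I * (#I / Fintype.card G ^ 2) ≤
      (Fintype.card G - 1) * Fintype.card G ^ Fintype.card ι * (#I / Fintype.card G ^ 2) := by
    convert h using 1 <;> push_cast <;> field_simp
  exact le_of_mul_le_mul_right h_scaled (by positivity)

end SubsetSum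

theorem prob_no_subset_sum_one_general (q d : ℕ) [NeZero q] (hd : 1 ≤ d) :
    ((Finset.univ.filter fun β : Fin d → ZMod q =>
        ¬ ∃ T : Finset (Fin d), T.Nonempty ∧ ∑ j ∈ T, β j = 1).card : ℝ) /
        (q : ℝ) ^ d ≤ ((q : ℝ) - 1) / (2 ^ d - 1) := by
  have : Nonempty (Fin d) := ⟨⟨0, hd⟩⟩
  simpa using card_not_exists_subset_sum_eq_div_le (ι := Fin d) (G := ZMod q) 1

/-- For i.i.d. uniform `β : Fin d → ZMod q`, the probability that no nonempty
subset `T` satisfies `∑_{j ∈ T} β j = 1` is at most `(q-1)/(2^d - 1)`. -/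
theorem prob_no_subset_sum_one (q d : ℕ) [NeZero q] (hq : q.Prime) (hd : 1 ≤ d) :
    ((Finset.univ.filter fun β : Fin d → ZMod q =>
        ¬ ∃ T : Finset (Fin d), T.Nonempty ∧ ∑ j ∈ T, β j = 1).card : ℝ) /
        (q : ℝ) ^ d ≤ ((q : ℝ) - 1) / (2 ^ d - 1) :=
  prob_no_subset_sum_one_general q d hd
end

section
/- Let q ≥ 5 be a prime and let A ⊆ F_q be a set such that F_q \ A = {±a_1, ..., ±a_k} for some 1 ≤ a_1 < ... < a_k ≤ ⌊q/2⌋ with 1 ≤ k < ⌊q/2⌋ (so A is symmetric, contains 0, and contains some nonzero element). Given m ≥ k^{k(k-1)/2}·(n+k+1)^{k+1} vectors v_1, ..., v_m ∈ F_q^n, there exist coefficients α_1, ..., α_m ∈ A, not all zero, with Σ α_i v_i = 0. -/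
/-!
Let `S ⊆ 𝔽_q` be maximal with `S - S ⊆ A`. Since `0 ∈ A = -A`, maximality forces
`𝔽_q = ({0} ∪ Aᶜ) + S`, so `q ≤ (2k + 1)|S|`; as `q > 2k + 1`, also `|S| ≥ 2`, whence
`q ≤ |S|^(2k+1)`. The bound on `m` gives `|S|^m > q^n = |𝔽_q^n|`, so two distinct coefficient
vectors in `S^m` give the same combination of the `v_i`, and their difference is a nontrivial
zero-sum with coefficients in `S - S ⊆ A`.
-/

open Finset
open scoped Pointwise

section Pigeonhole

variable {R M ι : Type*} [Ring R] [AddCommGroup M] [Module R M] [Fintype M] [Fintype ι]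

theorem exists_ne_zero_sum_smul_eq_zero_of_sub_mem (A : Set R) (S : Finset R)
    (hS : ∀ x ∈ S, ∀ y ∈ S, x - y ∈ A) (v : ι → M)
    (hcard : Fintype.card M < #S ^ Fintype.card ι) :
    ∃ α : ι → R, (∀ i, α i ∈ A) ∧ α ≠ 0 ∧ ∑ i, α i • v i = 0 := by
  classical
  obtain ⟨β, hβ, γ, hγ, hne, heq⟩ := exists_ne_map_eq_of_card_lt_of_maps_to
    (s := Fintype.piFinset fun _ : ι => S) (t := univ) (f := fun β => ∑ i, β i • v i)
    (by simpa [Fintype.card_piFinset] using hcard) (fun _ _ => mem_univ _)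
  refine ⟨β - γ, fun i => hS _ (Fintype.mem_piFinset.mp hβ i) _ (Fintype.mem_piFinset.mp hγ i),
    sub_ne_zero.mpr hne, ?_⟩
  simp only [Pi.sub_apply, sub_smul, sum_sub_distrib]
  exact sub_eq_zero.mpr heq

end Pigeonhole

section DifferenceSet

variable {G : Type*} [AddGroup G] [Fintype G] [DecidableEq G]

theorem exists_sub_mem_and_card_le (A : Finset G) (hA0 : 0 ∈ A) (hAneg : ∀ x ∈ A, -x ∈ A) :
    ∃ S : Finset G, (∀ x ∈ S, ∀ y ∈ S, x - y ∈ A) ∧ Fintype.card G ≤ (#Aᶜ + 1) * #S := by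
  obtain ⟨S, hSmem, hSmax⟩ := exists_max_image
    ((univ : Finset (Finset G)).filter fun T => ∀ x ∈ T, ∀ y ∈ T, x - y ∈ A) card ⟨∅, by simp⟩
  have hS : ∀ x ∈ S, ∀ y ∈ S, x - y ∈ A := (mem_filter.mp hSmem).2
  refine ⟨S, hS, ?_⟩
  -- by maximality of `S` and `A = -A`, each `z ∉ S` is `d + y` with `d ∈ Aᶜ`, `y ∈ S`
  have hcover : univ ⊆ insert 0 Aᶜ + S := by
    intro z _
    by_cases hz : ∃ y ∈ S, z - y ∉ A
    · obtain ⟨y, hy, hzy⟩ := hz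
      exact mem_add.mpr ⟨z - y, mem_insert_of_mem (mem_compl.mpr hzy), y, hy, sub_add_cancel z y⟩
    · simp only [not_exists, not_and, not_not] at hz
      have hins : insert z S ∈ (univ : Finset (Finset G)).filter
          fun T => ∀ x ∈ T, ∀ y ∈ T, x - y ∈ A := by
        refine mem_filter.mpr ⟨mem_univ _, ?_⟩
        simp only [mem_insert]
        rintro x (rfl | hx) y (rfl | hy)
        · simpa using hA0
        · exact hz y hy
        · simpa using hAneg _ (hz x hx)
        · exact hS x hx y hy
      have hzS : z ∈ S := by
        by_contra hzS
        have := hSmax _ hins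
        rw [card_insert_of_notMem hzS] at this
        omega
      simpa using add_mem_add (mem_insert_self 0 Aᶜ) hzS
  calc Fintype.card G = #(univ : Finset G) := card_univ.symm
    _ ≤ #(insert 0 Aᶜ + S) := card_le_card hcover
    _ ≤ #(insert 0 Aᶜ) * #S := card_add_le
    _ ≤ (#Aᶜ + 1) * #S := Nat.mul_le_mul_right _ (card_insert_le _ _)

end DifferenceSet

section AntipodalPairs

variable {G ι : Type*} [AddGroup G] [Fintype G] [DecidableEq G] [Fintype ι]

def avoidingPairs (b : ι → G) : Finset G :=
  univ.filter fun x => ∀ i, x ≠ b i ∧ x ≠ -b i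

theorem mem_avoidingPairs {b : ι → G} {x : G} :
    x ∈ avoidingPairs b ↔ ∀ i, x ≠ b i ∧ x ≠ -b i := by
  simp [avoidingPairs]

theorem zero_mem_avoidingPairs {b : ι → G} (hb : ∀ i, b i ≠ 0) : 0 ∈ avoidingPairs b :=
  mem_avoidingPairs.mpr fun i => ⟨(hb i).symm, by simpa [eq_comm] using hb i⟩

theorem neg_mem_avoidingPairs {b : ι → G} {x : G} (hx : x ∈ avoidingPairs b) :
    -x ∈ avoidingPairs b :=
  mem_avoidingPairs.mpr fun i => by
    obtain ⟨h₁, h₂⟩ := mem_avoidingPairs.mp hx i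
    exact ⟨fun h => h₂ (by rw [← h, neg_neg]), fun h => h₁ (neg_injective h)⟩

theorem card_compl_avoidingPairs_le (b : ι → G) :
    #(avoidingPairs b)ᶜ ≤ 2 * Fintype.card ι := by
  have hsub : (avoidingPairs b)ᶜ ⊆ univ.image b ∪ univ.image (-b) := by
    intro x hx
    obtain ⟨i, hi⟩ := not_forall.mp (mt mem_avoidingPairs.mpr (mem_compl.mp hx))
    rcases not_and_or.mp hi with h | h
    · exact mem_union_left _ (mem_image.mpr ⟨i, mem_univ _, (not_not.mp h).symm⟩)
    · exact mem_union_right _ (mem_image.mpr ⟨i, mem_univ _, (not_not.mp h).symm⟩)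
  calc #(avoidingPairs b)ᶜ ≤ #(univ.image b ∪ univ.image (-b)) := card_le_card hsub
    _ ≤ #(univ.image b) + #(univ.image (-b)) := card_union_le _ _
    _ ≤ Fintype.card ι + Fintype.card ι := add_le_add card_image_le card_image_le
    _ = 2 * Fintype.card ι := (two_mul _).symm

end AntipodalPairs

theorem pow_lt_pow_of_le_mul {q c s n m : ℕ} (hc : c < q) (hqs : q ≤ c * s) (hm : c * n < m) :
    q ^ n < s ^ m := by
  have hs : 2 ≤ s := by
    by_contra! h
    interval_cases s <;> omega
  have hc1 : 1 ≤ c := by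
    by_contra! h
    interval_cases c; omega
  have hcs : c ≤ s ^ (c - 1) :=
    calc c ≤ 2 ^ (c - 1) := by have := Nat.lt_two_pow_self (n := c - 1); omega
      _ ≤ s ^ (c - 1) := Nat.pow_le_pow_left hs _
  calc q ^ n ≤ (c * s) ^ n := Nat.pow_le_pow_left hqs n
    _ ≤ (s ^ (c - 1) * s) ^ n := by gcongr
    _ = s ^ (c * n) := by rw [← pow_succ, Nat.sub_add_cancel hc1, pow_mul]
    _ < s ^ m := Nat.pow_lt_pow_right hs hm

theorem two_mul_add_one_mul_lt (k n : ℕ) :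
    (2 * k + 1) * n < k ^ (k * (k - 1) / 2) * (n + k + 1) ^ (k + 1) := by
  rcases k with _ | k
  · simp
  · have h₁ : 1 ≤ (k + 1) ^ ((k + 1) * k / 2) := Nat.one_le_pow _ _ k.succ_pos
    have h₂ : (n + (k + 1) + 1) ^ 2 ≤ (n + (k + 1) + 1) ^ (k + 1 + 1) :=
      Nat.pow_le_pow_right (by omega) (by omega)
    simp only [Nat.add_sub_cancel]
    nlinarith

theorem cis_centered_general (q : ℕ)
    (k n m : ℕ) (hk2 : k < q / 2)
    (a : Fin k → ℕ)
    (ha1 : ∀ i, 1 ≤ a i) (ha2 : ∀ i, a i ≤ q / 2)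
    (A : Finset (ZMod q))
    (hA : ∀ x : ZMod q, x ∈ A ↔ ∀ i, x ≠ (a i : ZMod q) ∧ x ≠ -(a i : ZMod q))
    (hm : k ^ (k * (k - 1) / 2) * (n + k + 1) ^ (k + 1) ≤ m)
    (v : Fin m → Fin n → ZMod q) :
    ∃ α : Fin m → ZMod q, (∀ i, α i ∈ A) ∧ α ≠ 0 ∧ ∑ i, α i • v i = 0 := by
  have : NeZero q := ⟨by omega⟩
  obtain rfl : A = avoidingPairs fun i => (a i : ZMod q) := by
    ext x; exact (hA x).trans mem_avoidingPairs.symm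
  have ha0 : ∀ i, (a i : ZMod q) ≠ 0 := fun i h => by
    have := Nat.le_of_dvd (ha1 i) ((ZMod.natCast_eq_zero_iff _ _).mp h)
    have := ha2 i
    omega
  obtain ⟨S, hS, hcard⟩ := exists_sub_mem_and_card_le _ (zero_mem_avoidingPairs ha0)
    fun _ => neg_mem_avoidingPairs
  have hcompl := card_compl_avoidingPairs_le fun i => (a i : ZMod q)
  rw [ZMod.card] at hcard
  rw [Fintype.card_fin] at hcompl
  refine exists_ne_zero_sum_smul_eq_zero_of_sub_mem _ S hS v ?_
  rw [Fintype.card_fun, ZMod.card, Fintype.card_fin, Fintype.card_fin]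
  refine pow_lt_pow_of_le_mul (by omega) hcard ?_
  calc _ ≤ (2 * k + 1) * n := by gcongr
    _ < m := (two_mul_add_one_mul_lt k n).trans_le hm

/-- Nontrivial `A`-zero-sum where the complement of `A` consists of `k`
antipodal pairs `{±a_i}` of nonzero elements, whenever
`m ≥ k^{k(k-1)/2}·(n+k+1)^{k+1}` (worst-case vectors). -/
theorem cis_centered (q : ℕ) (hq : q.Prime) (hq5 : 5 ≤ q)
    (k n m : ℕ) (hk1 : 1 ≤ k) (hk2 : k < q / 2)
    (a : Fin k → ℕ) (hmono : StrictMono a)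
    (ha1 : ∀ i, 1 ≤ a i) (ha2 : ∀ i, a i ≤ q / 2)
    (A : Finset (ZMod q))
    (hA : ∀ x : ZMod q, x ∈ A ↔ ∀ i, x ≠ (a i : ZMod q) ∧ x ≠ -(a i : ZMod q))
    (hm : k ^ (k * (k - 1) / 2) * (n + k + 1) ^ (k + 1) ≤ m)
    (v : Fin m → Fin n → ZMod q) :
    ∃ α : Fin m → ZMod q, (∀ i, α i ∈ A) ∧ α ≠ 0 ∧ ∑ i, α i • v i = 0 :=
  cis_centered_general q k n m hk2 a ha1 ha2 A hA hm v
end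

section
/- Let q ≥ 5 be a prime and let k be an integer with 2 ≤ k ≤ ⌊q/2⌋. Given m ≥ (k-1)^{(k-1)(k-2)/2}·(n+k)^k vectors v_1, ..., v_m in F_q^n, there exist integers α_1, ..., α_m with |α_i| ≤ ⌊q/(2k)⌋, not all zero, such that Σ α_i v_i = 0 in F_q^n. -/
/-!
Pigeonhole: there are `(h + 1) ^ m` combinations `∑ εᵢ vᵢ` with `0 ≤ εᵢ ≤ h` but only `q ^ n`
vectors in `F_q^n`, so as soon as `q ^ n < (h + 1) ^ m` two distinct combinations coincide, and
their difference is a nontrivial `(±h)`-zero-sum. For `h = ⌊q/(2k)⌋` one has `q < 2k (h + 1)`,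
hence `q ≤ (h + 1) ^ (2k)`, and the hypothesis on `m` gives `m > 2kn`, which is enough.
-/

open Finset

theorem exists_ne_zero_sum_zsmul_eq_zero_of_card_lt {M ι : Type*} [AddCommGroup M] [Fintype M]
    [Fintype ι] (h : ℕ) (hcard : Fintype.card M < (h + 1) ^ Fintype.card ι) (v : ι → M) :
    ∃ α : ι → ℤ, (∀ i, |α i| ≤ h) ∧ α ≠ 0 ∧ ∑ i, α i • v i = 0 := by
  classical
  let f : (ι → Fin (h + 1)) → M := fun ε => ∑ i, (ε i : ℕ) • v i
  obtain ⟨ε, ε', hne, heq⟩ := Fintype.exists_ne_map_eq_of_card_lt f (by simpa using hcard)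
  refine ⟨fun i => (ε i : ℤ) - ε' i, fun i => ?_, fun hzero => hne ?_, ?_⟩
  · have := (ε i).isLt
    have := (ε' i).isLt
    simp only [abs_le]
    omega
  · ext i
    simpa [sub_eq_zero] using congrFun hzero i
  · simp only [sub_smul, sum_sub_distrib, natCast_zsmul]
    exact sub_eq_zero.mpr heq

theorem Nat.lt_pow_div_add_one {q d : ℕ} (hd : 0 < d) (hdq : d ≤ q) : q < (q / d + 1) ^ d :=
  calc q < d * (q / d + 1) := Nat.lt_mul_div_succ q hd
    _ = (q / d + 1) * d := Nat.mul_comm _ _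
    _ ≤ (q / d + 1) ^ d := Nat.mul_le_pow (by have := Nat.div_pos hdq hd; omega) d

theorem Nat.two_mul_mul_lt_pow_mul_add_pow {k n : ℕ} (hk : 2 ≤ k) :
    2 * k * n < (k - 1) ^ ((k - 1) * (k - 2) / 2) * (n + k) ^ k :=
  calc 2 * k * n < (n + k) ^ 2 := by nlinarith
    _ ≤ (n + k) ^ k := Nat.pow_le_pow_right (by omega) hk
    _ ≤ (k - 1) ^ ((k - 1) * (k - 2) / 2) * (n + k) ^ k :=
      Nat.le_mul_of_pos_left _ (Nat.pow_pos (by omega))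

theorem sis_general_k_general (q : ℕ)
    (k n m : ℕ) (hk1 : 2 ≤ k) (hk2 : k ≤ q / 2)
    (hm : (k - 1) ^ ((k - 1) * (k - 2) / 2) * (n + k) ^ k ≤ m)
    (v : Fin m → Fin n → ZMod q) :
    ∃ α : Fin m → ℤ, (∀ i, |α i| ≤ (q / (2 * k) : ℕ)) ∧ α ≠ 0 ∧
      ∑ i, (α i : ZMod q) • v i = 0 := by
  have h2kq : 2 * k ≤ q := by omega
  have : NeZero q := ⟨by omega⟩
  have hcount : q ^ n < (q / (2 * k) + 1) ^ m :=
    calc q ^ n ≤ ((q / (2 * k) + 1) ^ (2 * k)) ^ n :=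
          Nat.pow_le_pow_left (Nat.lt_pow_div_add_one (by omega) h2kq).le n
      _ = (q / (2 * k) + 1) ^ (2 * k * n) := (pow_mul _ _ _).symm
      _ < (q / (2 * k) + 1) ^ m := Nat.pow_lt_pow_right
          (by have := Nat.div_pos h2kq (by omega); omega)
          ((Nat.two_mul_mul_lt_pow_mul_add_pow hk1).trans_le hm)
  obtain ⟨α, hα, hne, hsum⟩ := exists_ne_zero_sum_zsmul_eq_zero_of_card_lt (q / (2 * k))
    (by simpa [Fintype.card_fun, ZMod.card] using hcount) v
  exact ⟨α, hα, hne, by simpa only [Int.cast_smul_eq_zsmul] using hsum⟩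

/-- For any integer `2 ≤ k ≤ ⌊q/2⌋` and `m ≥ (k-1)^{(k-1)(k-2)/2}·(n+k)^k`
vectors in `F_q^n`, there is a nontrivial `(±⌊q/(2k)⌋)`-zero-sum. -/
theorem sis_general_k (q : ℕ) (hq : q.Prime) (hq5 : 5 ≤ q)
    (k n m : ℕ) (hk1 : 2 ≤ k) (hk2 : k ≤ q / 2)
    (hm : (k - 1) ^ ((k - 1) * (k - 2) / 2) * (n + k) ^ k ≤ m)
    (v : Fin m → Fin n → ZMod q) :
    ∃ α : Fin m → ℤ, (∀ i, |α i| ≤ (q / (2 * k) : ℕ)) ∧ α ≠ 0 ∧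
      ∑ i, (α i : ZMod q) • v i = 0 :=
  sis_general_k_general q k n m hk1 hk2 hm v
end
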